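/- arXiv:1812.06231 — 7 statements merged into one kernel-verified Lean document; each statement's English description precedes it below -/
import Mathlib

section
/- Let q be an odd prime power and let m ≥ 2 be an integer with gcd(q-1, m(m-1)) = 2. Then the discriminants of the monic irreducible polynomials of degree m in F_q[x] are equally distributed among the (q-1)/2 elements d of F_q^× with χ_q(d) = (-1)^(m-1); that is, for any two elements d_1, d_2 ∈ F_q^× with χ_q(d_1) = χ_q(d_2) = (-1)^(m-1), the number of monic irreducible polynomials of degree m in F_q[x] with discriminant d_1 equals the number with discriminant d_2. -/
open Polynomial
open scoped Classical

/-- The discriminant of a polynomial `f` of degree `m ≥ 2` over a field `F`, computed in an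
algebraic closure via the standard formula
`disc(f) = (-1)^(m(m-1)/2) · a_m^(m-2) · ∏_i f'(α_i)`, where `a_m` is the leading coefficient
and the `α_i` are the roots of `f` (with multiplicity) in the algebraic closure; this equals
`a_m^(2m-2) · ∏_{i<j} (α_i - α_j)^2`.  For `f` of degree at most 1 it is defined to be `1`. -/
noncomputable def polyDisc {F : Type*} [Field F] (f : F[X]) : AlgebraicClosure F :=
  if f.natDegree ≤ 1 then 1
  else
    (-1) ^ (f.natDegree * (f.natDegree - 1) / 2) *
      algebraMap F (AlgebraicClosure F) f.leadingCoeff ^ (f.natDegree - 2) *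
      (Multiset.map (fun a => ((derivative f).map (algebraMap F (AlgebraicClosure F))).eval a)
        (f.map (algebraMap F (AlgebraicClosure F))).roots).prod

/-- The Möbius function on polynomials over a field: `μ f = (-1)^k` if `f` is squarefree
with `k` (distinct) monic irreducible factors, and `μ f = 0` otherwise. -/
noncomputable def polyMu {F : Type*} [Field F] (f : F[X]) : ℤ :=
  if Squarefree f then (-1) ^ {π : F[X] | π.Monic ∧ Irreducible π ∧ π ∣ f}.ncard else 0

/-- `f` has factorization type `λ` (a partition of `m`): `f` is a product of distinct monic
irreducible polynomials whose degrees form the multiset of parts of `λ`.  The set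
`S_{λ,F}` of monic squarefree polynomials of factorization type `λ` is
`{f | hasFactorizationType f λ}`. -/
def hasFactorizationType {F : Type*} [Field F] (f : F[X]) {m : ℕ} (lam : m.Partition) : Prop :=
  ∃ s : Finset F[X], (∀ π ∈ s, π.Monic ∧ Irreducible π) ∧ (∏ π ∈ s, π) = f ∧
    Multiset.map natDegree s.val = lam.parts

/-! The substitution `f(x) ↦ s ^ m f(x / s)` (`Polynomial.scaleRoots f s`), which multiplies
every root by `s ∈ F^×`, is a bijection on monic irreducible polynomials of degree `m` and
multiplies the discriminant by `s ^ (m(m-1))`. Because `gcd(q-1, m(m-1)) = 2`, every nonzero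
square is an `m(m-1)`-th power (Bézout in the group `F^×` of order `q - 1`), and `d₁ / d₂` is a
square since `χ(d₁) = χ(d₂)`; so some scaling carries the polynomials of discriminant `d₂`
bijectively onto those of discriminant `d₁`. -/

namespace Polynomial

lemma scaleRoots_comp_C_mul_X {R : Type*} [CommSemiring R] (p : R[X]) (s : R) :
    (p.scaleRoots s).comp (C s * X) = C (s ^ p.natDegree) * p := by
  ext n
  rw [comp_C_mul_X_coeff, coeff_scaleRoots, coeff_C_mul]
  rcases le_or_gt n p.natDegree with hn | hn
  · rw [mul_assoc, ← pow_add, Nat.sub_add_cancel hn, mul_comm]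
  · rw [coeff_eq_zero_of_natDegree_lt hn, zero_mul, zero_mul, mul_zero]

variable {R : Type*} [CommRing R] [IsDomain R]

lemma eval_mul_derivative_scaleRoots (p : R[X]) {s : R} (hs : s ≠ 0) (a : R) :
    (derivative (p.scaleRoots s)).eval (s * a) =
      s ^ (p.natDegree - 1) * (derivative p).eval a := by
  rcases Nat.eq_zero_or_pos p.natDegree with h0 | hpos
  · rw [derivative_of_natDegree_zero h0,
      derivative_of_natDegree_zero ((natDegree_scaleRoots p s).trans h0), eval_zero, eval_zero,
      mul_zero]
  -- differentiate `(p.scaleRoots s)(s x) = s ^ n p(x)` by the chain rule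
  have hchain := congrArg (fun q => (derivative q).eval a) (scaleRoots_comp_C_mul_X p s)
  simp only [derivative_comp, derivative_C_mul, derivative_X, mul_one, eval_mul, eval_C,
    eval_comp, eval_X] at hchain
  rw [← Nat.sub_add_cancel hpos, pow_succ] at hchain
  exact mul_left_cancel₀ hs (by linear_combination hchain)

noncomputable def scaleRootsEquiv (u : Rˣ) : R[X] ≃* R[X] where
  toFun p := p.scaleRoots u
  invFun p := p.scaleRoots ↑u⁻¹
  left_inv p := by simp only [← scaleRoots_mul, Units.mul_inv, scaleRoots_one]
  right_inv p := by simp only [← scaleRoots_mul, Units.inv_mul, scaleRoots_one]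
  map_mul' p q := mul_scaleRoots_of_noZeroDivisors p q u

@[simp]
lemma scaleRootsEquiv_apply (u : Rˣ) (p : R[X]) : scaleRootsEquiv u p = p.scaleRoots u := rfl

lemma irreducible_scaleRoots_iff {p : R[X]} (u : Rˣ) :
    Irreducible (p.scaleRoots u) ↔ Irreducible p :=
  MulEquiv.irreducible_iff (f := scaleRootsEquiv u)

end Polynomial

lemma polyDisc_scaleRoots {F : Type*} [Field F] (f : F[X]) {s : F} (hs : s ≠ 0) :
    polyDisc (f.scaleRoots s) =
      algebraMap F (AlgebraicClosure F) s ^ (f.natDegree * (f.natDegree - 1)) * polyDisc f := by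
  unfold polyDisc
  rw [natDegree_scaleRoots, leadingCoeff_scaleRoots]
  split_ifs with hn
  · rw [Nat.mul_eq_zero.mpr (by omega), pow_zero, mul_one]
  set ι := algebraMap F (AlgebraicClosure F)
  set n := f.natDegree
  have hf : f ≠ 0 := by rintro rfl; simp [n] at hn
  have hιs : ι s ≠ 0 := (map_ne_zero ι).mpr hs
  have hroots : ((f.scaleRoots s).map ι).roots = (f.map ι).roots.map (ι s * ·) := by
    rw [map_scaleRoots _ _ _ ((map_ne_zero ι).mpr (leadingCoeff_ne_zero.mpr hf)),
      roots_scaleRoots _ hιs.isUnit]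
  have hderiv (a : AlgebraicClosure F) :
      ((derivative (f.scaleRoots s)).map ι).eval (ι s * a) =
        ι s ^ (n - 1) * ((derivative f).map ι).eval a := by
    rw [← derivative_map,
      map_scaleRoots _ _ _ ((map_ne_zero ι).mpr (leadingCoeff_ne_zero.mpr hf)),
      eval_mul_derivative_scaleRoots _ hιs, natDegree_map, derivative_map]
  rw [hroots, Multiset.map_map, Function.comp_def]
  simp only [hderiv]
  rw [Multiset.prod_map_mul, Multiset.map_const', Multiset.prod_replicate,
    IsAlgClosed.card_roots_map_eq_natDegree_of_injective f ι.injective, ← pow_mul,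
    Nat.mul_comm (n - 1)]
  ring

lemma pow_gcd_card_eq_zpow_gcdB_pow {G : Type*} [Group G] [Finite G] (g : G) (k : ℕ) :
    g ^ (Nat.card G).gcd k = (g ^ (Nat.card G).gcdB k) ^ k := by
  rw [← zpow_natCast, Nat.gcd_eq_gcd_ab, zpow_add, zpow_mul, zpow_natCast g (Nat.card G),
    pow_card_eq_one', one_zpow, one_mul, ← zpow_natCast (g ^ _), ← zpow_mul, mul_comm]

lemma FiniteField.exists_pow_eq_of_isSquare {F : Type*} [Field F] [Fintype F] {k : ℕ}
    (hk : (Fintype.card F - 1).gcd k = 2) {a : F} (ha : a ≠ 0) (hsq : IsSquare a) :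
    ∃ c : F, c ≠ 0 ∧ c ^ k = a := by
  obtain ⟨v, rfl⟩ := hsq
  have hv : v ≠ 0 := by rintro rfl; simp at ha
  have hcard : Nat.card Fˣ = Fintype.card F - 1 := by
    rw [Nat.card_eq_fintype_card, Fintype.card_units]
  have key := pow_gcd_card_eq_zpow_gcdB_pow (Units.mk0 v hv) k
  rw [hcard, hk] at key
  refine ⟨↑(Units.mk0 v hv ^ (Fintype.card F - 1).gcdB k), Units.ne_zero _, ?_⟩
  rw [← Units.val_pow_eq_pow_val, ← key, Units.val_pow_eq_pow_val, Units.val_mk0, sq]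

lemma isSquare_div_of_quadraticChar_eq {F : Type*} [Field F] [Fintype F] [DecidableEq F]
    {a b : F} (ha : a ≠ 0) (hb : b ≠ 0) (h : quadraticChar F a = quadraticChar F b) :
    IsSquare (a / b) := by
  rw [← quadraticChar_one_iff_isSquare (div_ne_zero ha hb), div_eq_mul_inv, map_mul,
    ← MulChar.inv_apply', (quadraticChar_isQuadratic F).inv, h, ← sq, quadraticChar_sq_one hb]

def monicIrreducibleOfDisc {F : Type*} [Field F] (m : ℕ) (d : F) : Set F[X] :=
  {f | f.Monic ∧ Irreducible f ∧ f.natDegree = m ∧ polyDisc f = algebraMap F _ d}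

lemma scaleRoots_preimage_monicIrreducibleOfDisc {F : Type*} [Field F] (m : ℕ) (u : Fˣ)
    (d : F) :
    scaleRootsEquiv u ⁻¹' monicIrreducibleOfDisc m (u ^ (m * (m - 1)) * d) =
      monicIrreducibleOfDisc m d := by
  ext f
  simp only [monicIrreducibleOfDisc, Set.mem_preimage, Set.mem_ofPred_eq,
    scaleRootsEquiv_apply, irreducible_scaleRoots_iff, monic_scaleRoots_iff, natDegree_scaleRoots,
    and_congr_right_iff]
  intro _ _ hm
  rw [polyDisc_scaleRoots _ u.ne_zero, hm, map_mul, map_pow]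
  exact mul_right_inj' (pow_ne_zero _ ((_root_.map_ne_zero _).mpr u.ne_zero))

lemma ncard_monicIrreducibleOfDisc_pow_mul {F : Type*} [Field F] (m : ℕ) {s : F} (hs : s ≠ 0)
    (d : F) :
    (monicIrreducibleOfDisc m (s ^ (m * (m - 1)) * d)).ncard =
      (monicIrreducibleOfDisc m d).ncard := by
  let u := Units.mk0 s hs
  rw [← scaleRoots_preimage_monicIrreducibleOfDisc m u d]
  exact (Set.ncard_preimage_of_injective_subset_range (scaleRootsEquiv u).injective
    (by simp [(scaleRootsEquiv u).surjective.range_eq])).symm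

theorem stmt1_general {F : Type*} [Field F] [Fintype F] [DecidableEq F] (q m : ℕ)
    (hq : Fintype.card F = q)
    (hgcd : Nat.gcd (q - 1) (m * (m - 1)) = 2) (d₁ d₂ : F) (hd₁ : d₁ ≠ 0) (hd₂ : d₂ ≠ 0)
    (hχ₁ : quadraticChar F d₁ = (-1 : ℤ) ^ (m - 1))
    (hχ₂ : quadraticChar F d₂ = (-1 : ℤ) ^ (m - 1)) :
    {f : F[X] | f.Monic ∧ Irreducible f ∧ f.natDegree = m ∧
        polyDisc f = algebraMap F (AlgebraicClosure F) d₁}.ncard =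
    {f : F[X] | f.Monic ∧ Irreducible f ∧ f.natDegree = m ∧
        polyDisc f = algebraMap F (AlgebraicClosure F) d₂}.ncard := by
  obtain ⟨c, hc, hcd⟩ := FiniteField.exists_pow_eq_of_isSquare (hq ▸ hgcd)
    (div_ne_zero hd₁ hd₂) (isSquare_div_of_quadraticChar_eq hd₁ hd₂ (hχ₁.trans hχ₂.symm))
  have hd : d₁ = c ^ (m * (m - 1)) * d₂ := by rw [hcd, div_mul_cancel₀ _ hd₂]
  change (monicIrreducibleOfDisc m d₁).ncard = (monicIrreducibleOfDisc m d₂).ncard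
  rw [hd, ncard_monicIrreducibleOfDisc_pow_mul m hc]

/-- If `q` is an odd prime power and `m ≥ 2` satisfies `gcd(q-1, m(m-1)) = 2`, then the
discriminants of the monic irreducible polynomials of degree `m` are equally distributed among
the elements `d` of `F_q^×` with `χ_q(d) = (-1)^(m-1)`. -/
theorem stmt1 {F : Type*} [Field F] [Fintype F] [DecidableEq F] (q m : ℕ)
    (hq : Fintype.card F = q) (hodd : Odd q) (hm : 2 ≤ m)
    (hgcd : Nat.gcd (q - 1) (m * (m - 1)) = 2) (d₁ d₂ : F) (hd₁ : d₁ ≠ 0) (hd₂ : d₂ ≠ 0)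
    (hχ₁ : quadraticChar F d₁ = (-1 : ℤ) ^ (m - 1))
    (hχ₂ : quadraticChar F d₂ = (-1 : ℤ) ^ (m - 1)) :
    {f : F[X] | f.Monic ∧ Irreducible f ∧ f.natDegree = m ∧
        polyDisc f = algebraMap F (AlgebraicClosure F) d₁}.ncard =
    {f : F[X] | f.Monic ∧ Irreducible f ∧ f.natDegree = m ∧
        polyDisc f = algebraMap F (AlgebraicClosure F) d₂}.ncard :=
  stmt1_general q m hq hgcd d₁ d₂ hd₁ hd₂ hχ₁ hχ₂
end

section
/- Let q be a power of 2 and let m ≥ 2 be an integer with gcd(q-1, m(m-1)) = 1. Then for every d ∈ F_q, the number of monic polynomials of degree m in F_q[x] with discriminant equal to d is exactly q^(m-1). -/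
open Polynomial
open scoped Classical

/-!
Over a perfect field the discriminant of a monic polynomial vanishes exactly when the polynomial
is not squarefree. Writing every monic `f` uniquely as `u * v ^ 2` with `u` squarefree and `v`
monic gives `q ^ n = ∑ₖ s(n - 2k) q ^ k`, where `s(n)` counts squarefree monic polynomials of
degree `n`; comparing with the same identity for `n - 2` yields `s(n) = q ^ n - q ^ (n - 1)`, so
exactly `q ^ (m - 1)` monic polynomials of degree `m` have discriminant `0`. Replacing `f` by
`r ^ m f(x / r)` (`Polynomial.scaleRoots`) multiplies the discriminant by `r ^ (m (m - 1))`, and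
as `m (m - 1)` is prime to `q - 1` these factors exhaust `F_qˣ`. Hence every nonzero value is
attained equally often, i.e. `(q ^ m - q ^ (m - 1)) / (q - 1) = q ^ (m - 1)` times.
-/

namespace Polynomial

theorem derivative_scaleRoots {R : Type*} [CommSemiring R] (p : R[X]) (r : R) :
    (p.scaleRoots r).derivative =
      C (r ^ (p.natDegree - 1 - p.derivative.natDegree)) * p.derivative.scaleRoots r := by
  have hd := natDegree_derivative_le p
  ext j
  rw [coeff_derivative, coeff_C_mul, coeff_scaleRoots, coeff_scaleRoots, coeff_derivative]
  rcases le_or_gt j p.derivative.natDegree with hj | hj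
  · rw [mul_right_comm, mul_left_comm, ← pow_add]
    congr 3
    omega
  · have h0 : p.coeff (j + 1) * (j + 1) = 0 := by
      rw [← coeff_derivative]
      exact coeff_eq_zero_of_natDegree_lt hj
    rw [h0, zero_mul, mul_zero, mul_right_comm, h0, zero_mul]

/- `resultant f f.derivative` is taken with the actual degree of `f.derivative`, which can be
smaller than `f.natDegree - 1` (e.g. in characteristic `2`), whereas `resultant_deriv` uses the
size `f.natDegree - 1`. -/
theorem leadingCoeff_pow_mul_resultant_derivative {R : Type*} [CommRing R] {f : R[X]}
    (hf : 0 < f.natDegree) :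
    f.leadingCoeff ^ (f.natDegree - 1 - f.derivative.natDegree) * resultant f f.derivative =
      (-1) ^ (f.natDegree * (f.natDegree - 1) / 2) * f.leadingCoeff * f.discr := by
  rw [← resultant_deriv (natDegree_pos_iff_degree_pos.mp hf), leadingCoeff,
    ← resultant_add_right_deg _ _ _ _ _ le_rfl,
    Nat.add_sub_cancel' (natDegree_derivative_le f)]

theorem discr_scaleRoots {R : Type*} [CommRing R] [IsDomain R] {f : R[X]} (hf : 0 < f.natDegree)
    {r : R} (hr : r ≠ 0) :
    (f.scaleRoots r).discr = r ^ (f.natDegree * (f.natDegree - 1)) * f.discr := by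
  set m := f.natDegree
  set d := f.derivative.natDegree
  have hd : d ≤ m - 1 := natDegree_derivative_le f
  have hderiv : (f.scaleRoots r).derivative.natDegree = d := by
    rw [derivative_scaleRoots, natDegree_C_mul (pow_ne_zero _ hr), natDegree_scaleRoots]
  have hres : resultant (f.scaleRoots r) (f.scaleRoots r).derivative =
      r ^ (m * (m - 1)) * resultant f f.derivative := by
    have h := resultant_scaleRoots f f.derivative r
    rw [natDegree_scaleRoots, natDegree_scaleRoots] at h
    rw [hderiv, natDegree_scaleRoots, derivative_scaleRoots, resultant_C_mul_right, h,
      ← mul_assoc, ← pow_mul, ← pow_add]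
    congr 2
    rw [mul_comm, ← Nat.mul_add, Nat.sub_add_cancel hd]
  have hg := leadingCoeff_pow_mul_resultant_derivative (f := f.scaleRoots r)
    (by rwa [natDegree_scaleRoots])
  rw [hres, hderiv, natDegree_scaleRoots, leadingCoeff_scaleRoots, mul_left_comm,
    leadingCoeff_pow_mul_resultant_derivative hf] at hg
  have hlc : f.leadingCoeff ≠ 0 := leadingCoeff_ne_zero.mpr (ne_zero_of_natDegree_gt hf)
  have hsign : ((-1) ^ (m * (m - 1) / 2) : R) ≠ 0 := pow_ne_zero _ (neg_ne_zero.mpr one_ne_zero)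
  exact mul_left_cancel₀ (mul_ne_zero hsign hlc) (hg.symm.trans (by ring))

section Field

variable {K : Type*} [Field K]

theorem discr_eq_zero_iff_not_separable {f : K[X]} (hf : 0 < f.natDegree) :
    f.discr = 0 ↔ ¬ f.Separable := by
  have hlc : f.leadingCoeff ≠ 0 := leadingCoeff_ne_zero.mpr (ne_zero_of_natDegree_gt hf)
  have hsign : ((-1) ^ (f.natDegree * (f.natDegree - 1) / 2) : K) ≠ 0 :=
    pow_ne_zero _ (neg_ne_zero.mpr one_ne_zero)
  rw [separable_def, ← mul_eq_zero_iff_left (mul_ne_zero hsign hlc),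
    ← leadingCoeff_pow_mul_resultant_derivative hf, mul_eq_zero_iff_left (pow_ne_zero _ hlc),
    resultant_eq_zero_iff]
  simp [ne_zero_of_natDegree_gt hf]

theorem scaleRoots_scaleRoots_inv {r : K} (hr : r ≠ 0) (f : K[X]) :
    (f.scaleRoots r).scaleRoots r⁻¹ = f := by
  rw [← scaleRoots_mul, mul_inv_cancel₀ hr, scaleRoots_one]

end Field

end Polynomial

/- Both sides are `± lc(f)⁻¹ · Res(f, f')`: `resultant_eq_prod_eval` evaluates the resultant
over the algebraic closure as `lc(f) ^ (deg f - 1) · ∏ f'(α)`. -/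
theorem polyDisc_eq_algebraMap_discr {K : Type*} [Field K] {f : K[X]} (hf : 2 ≤ f.natDegree) :
    polyDisc f = algebraMap K (AlgebraicClosure K) f.discr := by
  set i := algebraMap K (AlgebraicClosure K)
  have hlc : i f.leadingCoeff ≠ 0 :=
    (map_ne_zero i).mpr (leadingCoeff_ne_zero.mpr (ne_zero_of_natDegree_gt (by omega : 0 < _)))
  have hprod := resultant_eq_prod_eval (f.map i) (f.map i).derivative (f.natDegree - 1)
    (by rw [derivative_map]; exact natDegree_map_le.trans (natDegree_derivative_le f))
    (IsAlgClosed.splits _)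
  rw [natDegree_map, derivative_map, resultant_map_map,
    resultant_deriv (natDegree_pos_iff_degree_pos.mp (by omega)), leadingCoeff_map,
    map_mul, map_mul, map_pow, map_neg, map_one] at hprod
  rw [polyDisc, if_neg (by omega)]
  set s : AlgebraicClosure K := (-1) ^ (f.natDegree * (f.natDegree - 1) / 2)
  have hs : s * s = 1 := by rw [← mul_pow, neg_one_mul, neg_neg, one_pow]
  have hpow : i f.leadingCoeff ^ (f.natDegree - 1) =
      i f.leadingCoeff * i f.leadingCoeff ^ (f.natDegree - 2) := by
    rw [← pow_succ']
    congr 1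
    omega
  rw [hpow] at hprod
  apply mul_left_cancel₀ hlc
  linear_combination (-s) * hprod + i f.leadingCoeff * i f.discr * hs

section UniqueFactorizationMonoid

variable {R : Type*} [CommMonoidWithZero R] [UniqueFactorizationMonoid R]

theorem exists_squarefree_mul_sq [DecompositionMonoid R] {a : R} (ha : a ≠ 0) :
    ∃ u v : R, Squarefree u ∧ a = u * v ^ 2 := by
  induction a using UniqueFactorizationMonoid.induction_on_prime with
  | h₁ => exact absurd rfl ha
  | h₂ x hx => exact ⟨x, 1, hx.squarefree, by rw [one_pow, mul_one]⟩
  | h₃ a p ha0 hp ih =>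
    obtain ⟨u, v, hu, rfl⟩ := ih ha0
    by_cases hpu : p ∣ u
    · obtain ⟨w, rfl⟩ := hpu
      exact ⟨w, p * v, hu.squarefree_of_dvd (dvd_mul_left w p), by rw [mul_pow, sq p]; ac_rfl⟩
    · refine ⟨p * u, v, squarefree_mul_iff.mpr ⟨?_, hp.irreducible.squarefree, hu⟩,
        (mul_assoc p u _).symm⟩
      exact hp.irreducible.isRelPrime_iff_not_dvd.mpr hpu

theorem associated_of_squarefree_mul_sq_eq {u u' v v' : R} (hu : Squarefree u)
    (hu' : Squarefree u') (h : u * v ^ 2 = u' * v' ^ 2) : Associated v v' := by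
  nontriviality R
  induction v using UniqueFactorizationMonoid.induction_on_prime generalizing u u' v' with
  | h₁ =>
    rw [zero_pow two_ne_zero, mul_zero, eq_comm, mul_eq_zero, or_iff_right hu'.ne_zero,
      pow_eq_zero_iff two_ne_zero] at h
    rw [h]
  | h₂ x hx =>
    have hv' : v' * v' ∣ u := by
      rw [← (hx.pow 2).dvd_mul_right, h, sq]
      exact dvd_mul_left _ _
    exact (associated_one_iff_isUnit.mpr hx).trans
      (associated_one_iff_isUnit.mpr (hu v' hv')).symm
  | h₃ a p ha0 hp ih =>
    have hpv' : p ∣ v' := by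
      have h2 : p ^ (1 + 1) ∣ u' * v' ^ 2 := ⟨u * a ^ 2, by rw [← h, mul_pow]; ac_rfl⟩
      exact hp.dvd_of_dvd_pow
        (pow_one p ▸ hu'.pow_dvd_of_squarefree_of_pow_succ_dvd_mul_right hp h2)
    obtain ⟨a', rfl⟩ := hpv'
    refine (ih hu hu' (mul_left_cancel₀ (pow_ne_zero 2 hp.ne_zero) ?_)).mul_left p
    calc p ^ 2 * (u * a ^ 2) = u * (p * a) ^ 2 := by rw [mul_pow]; ac_rfl
      _ = u' * (p * a') ^ 2 := h
      _ = p ^ 2 * (u' * a' ^ 2) := by rw [mul_pow]; ac_rfl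

end UniqueFactorizationMonoid

namespace Polynomial

variable {F : Type*} [Field F]

theorem Monic.exists_squarefree_mul_sq {f : F[X]} (hf : f.Monic) :
    ∃ u v : F[X], u.Monic ∧ Squarefree u ∧ v.Monic ∧ f = u * v ^ 2 := by
  obtain ⟨u, v, hu, rfl⟩ := _root_.exists_squarefree_mul_sq hf.ne_zero
  have hv : v ≠ 0 := by
    rintro rfl
    exact hf.ne_zero (by simp)
  obtain ⟨w, hw⟩ := (associated_normalize v).symm
  have hf' : u * v ^ 2 = u * (w : F[X]) ^ 2 * normalize v ^ 2 := by
    conv_lhs => rw [← hw]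
    ring
  have hnv : (normalize v).Monic := monic_normalize hv
  have hmonic : (u * (w : F[X]) ^ 2 * normalize v ^ 2).Monic := by rwa [← hf']
  refine ⟨u * (w : F[X]) ^ 2, normalize v, (hnv.pow 2).of_mul_monic_right hmonic, ?_, hnv, hf'⟩
  exact (associated_mul_unit_right u ((w : F[X]) ^ 2) (w.isUnit.pow 2)).squarefree_iff.mp hu

theorem eq_of_squarefree_mul_sq_eq {u u' v v' : F[X]} (hu : Squarefree u)
    (hu' : Squarefree u') (hv : v.Monic) (hv' : v'.Monic) (h : u * v ^ 2 = u' * v' ^ 2) :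
    u = u' ∧ v = v' := by
  obtain rfl := eq_of_monic_of_associated hv hv' (associated_of_squarefree_mul_sq_eq hu hu' h)
  exact ⟨mul_right_cancel₀ (pow_ne_zero 2 hv.ne_zero) h, rfl⟩

end Polynomial

theorem Set.ncard_eq_sum_ncard_fiber {α β : Type*} {s : Set α} (hs : s.Finite) {g : α → β}
    {t : Finset β} (h : Set.MapsTo g s t) : s.ncard = ∑ b ∈ t, {a ∈ s | g a = b}.ncard := by
  obtain ⟨s, rfl⟩ := hs.exists_finset_coe
  rw [Set.ncard_coe_finset, Finset.card_eq_sum_card_fiberwise h]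
  refine Finset.sum_congr rfl fun b _ => ?_
  rw [← Set.ncard_coe_finset, Finset.coe_filter]
  rfl

section Counting

variable (F : Type*) [Field F]

def monicsOfNatDegree (n : ℕ) : Set F[X] := {f | f.Monic ∧ f.natDegree = n}

def squarefreeMonicsOfNatDegree (n : ℕ) : Set F[X] := monicsOfNatDegree F n ∩ {f | Squarefree f}

def squarefreeSqPairs (n : ℕ) : Set (F[X] × F[X]) :=
  {x | x.1.Monic ∧ Squarefree x.1 ∧ x.2.Monic ∧ x.1.natDegree + 2 * x.2.natDegree = n}

def discrFiber (m : ℕ) (e : F) : Set F[X] := {f ∈ monicsOfNatDegree F m | f.discr = e}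

variable {F}

theorem bijOn_squarefreeSqPairs (n : ℕ) :
    Set.BijOn (fun x => x.1 * x.2 ^ 2) (squarefreeSqPairs F n) (monicsOfNatDegree F n) := by
  refine ⟨?_, ?_, ?_⟩
  · rintro ⟨u, v⟩ ⟨hu, -, hv, hdeg⟩
    refine ⟨hu.mul (hv.pow 2), ?_⟩
    rw [hu.natDegree_mul (hv.pow 2), natDegree_pow, hdeg]
  · rintro ⟨u, v⟩ ⟨-, hu, hv, -⟩ ⟨u', v'⟩ ⟨-, hu', hv', -⟩ h
    obtain ⟨rfl, rfl⟩ := eq_of_squarefree_mul_sq_eq hu hu' hv hv' h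
    rfl
  · rintro f ⟨hf, rfl⟩
    obtain ⟨u, v, hu, hsq, hv, rfl⟩ := hf.exists_squarefree_mul_sq
    refine ⟨(u, v), ⟨hu, hsq, hv, ?_⟩, rfl⟩
    rw [hu.natDegree_mul (hv.pow 2), natDegree_pow]

theorem discrFiber_zero [PerfectField F] {m : ℕ} (hm : 0 < m) :
    discrFiber F m 0 = monicsOfNatDegree F m \ {f | Squarefree f} := by
  ext f
  simp only [discrFiber, monicsOfNatDegree, Set.mem_sdiff, Set.mem_ofPred_eq, and_assoc]
  refine and_congr_right fun _ => and_congr_right fun hdeg => ?_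
  rw [discr_eq_zero_iff_not_separable (hdeg ▸ hm), PerfectField.separable_iff_squarefree]

theorem image_scaleRoots_discrFiber {m : ℕ} (hm : 0 < m) {r : F} (hr : r ≠ 0) (e : F) :
    (fun f : F[X] => f.scaleRoots r) '' discrFiber F m e =
      discrFiber F m (r ^ (m * (m - 1)) * e) := by
  have hmaps : ∀ {s : F} (hs : s ≠ 0) {e : F}, ∀ f ∈ discrFiber F m e,
      f.scaleRoots s ∈ discrFiber F m (s ^ (m * (m - 1)) * e) := by
    rintro s hs e f ⟨⟨hf, rfl⟩, rfl⟩
    exact ⟨⟨(monic_scaleRoots_iff s).mpr hf, natDegree_scaleRoots f s⟩,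
      discr_scaleRoots hm hs⟩
  refine subset_antisymm (Set.image_subset_iff.mpr fun f hf => hmaps hr f hf) fun g hg => ?_
  refine ⟨g.scaleRoots r⁻¹, ?_, ?_⟩
  · convert hmaps (inv_ne_zero hr) g hg using 2
    rw [← mul_assoc, ← mul_pow, inv_mul_cancel₀ hr, one_pow, one_mul]
  · simpa only [inv_inv] using scaleRoots_scaleRoots_inv (inv_ne_zero hr) g

variable [Fintype F]

theorem ncard_monicsOfNatDegree (n : ℕ) :
    (monicsOfNatDegree F n).ncard = Fintype.card F ^ n :=
  calc (monicsOfNatDegree F n).ncard = Nat.card {f : F[X] // f.Monic ∧ f.natDegree = n} :=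
        (Nat.card_coe_set_eq _).symm
    _ = Nat.card (Fin n → F) :=
        Nat.card_congr ((monicEquivDegreeLT n).trans (degreeLTEquiv F n).toEquiv)
    _ = Fintype.card F ^ n := by simp

theorem finite_monicsOfNatDegree (n : ℕ) : (monicsOfNatDegree F n).Finite :=
  Set.finite_of_ncard_ne_zero <| by
    rw [ncard_monicsOfNatDegree]
    exact pow_ne_zero _ Fintype.card_ne_zero

theorem pow_card_eq_sum_ncard_squarefreeMonicsOfNatDegree (n : ℕ) :
    Fintype.card F ^ n = ∑ k ∈ Finset.range (n / 2 + 1),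
      (squarefreeMonicsOfNatDegree F (n - 2 * k)).ncard * Fintype.card F ^ k := by
  have hbij := bijOn_squarefreeSqPairs (F := F) n
  have hfin : (squarefreeSqPairs F n).Finite :=
    .of_finite_image (hbij.image_eq ▸ finite_monicsOfNatDegree n) hbij.injOn
  have hmaps : Set.MapsTo (fun x => x.2.natDegree) (squarefreeSqPairs F n)
      (Finset.range (n / 2 + 1) : Set ℕ) := fun x ⟨_, _, _, hx⟩ =>
    Finset.mem_coe.mpr (Finset.mem_range.mpr (show x.2.natDegree < _ by omega))
  rw [← ncard_monicsOfNatDegree, ← hbij.ncard_eq, Set.ncard_eq_sum_ncard_fiber hfin hmaps]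
  refine Finset.sum_congr rfl fun k hk => ?_
  rw [Finset.mem_range] at hk
  rw [← ncard_monicsOfNatDegree, ← Set.ncard_prod]
  congr 1
  ext ⟨u, v⟩
  simp only [squarefreeSqPairs, squarefreeMonicsOfNatDegree, monicsOfNatDegree,
    Set.mem_ofPred_eq, Set.mem_prod, Set.mem_inter_iff]
  constructor
  · rintro ⟨⟨hu, hsq, hv, hdeg⟩, rfl⟩
    exact ⟨⟨⟨hu, by omega⟩, hsq⟩, hv, rfl⟩
  · rintro ⟨⟨⟨hu, hdeg⟩, hsq⟩, hv, rfl⟩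
    exact ⟨⟨hu, hsq, hv, by omega⟩, rfl⟩

theorem ncard_squarefreeMonicsOfNatDegree_add_pow {n : ℕ} (hn : 2 ≤ n) :
    (squarefreeMonicsOfNatDegree F n).ncard + Fintype.card F ^ (n - 1) = Fintype.card F ^ n := by
  have hprev := pow_card_eq_sum_ncard_squarefreeMonicsOfNatDegree (F := F) (n - 2)
  rw [pow_card_eq_sum_ncard_squarefreeMonicsOfNatDegree n, Finset.sum_range_succ',
    show n / 2 = (n - 2) / 2 + 1 by omega, show n - 1 = n - 2 + 1 by omega, pow_succ', hprev,
    Finset.mul_sum, mul_zero, Nat.sub_zero, pow_zero, mul_one, add_comm]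
  refine congrArg (· + _) (Finset.sum_congr rfl fun k _ => ?_)
  rw [show n - 2 * (k + 1) = n - 2 - 2 * k by omega]
  ring

theorem ncard_monicsOfNatDegree_diff_squarefree {n : ℕ} (hn : 2 ≤ n) :
    (monicsOfNatDegree F n \ {f | Squarefree f}).ncard = Fintype.card F ^ (n - 1) := by
  have h := Set.ncard_inter_add_ncard_sdiff_eq_ncard (monicsOfNatDegree F n) {f | Squarefree f}
    (finite_monicsOfNatDegree n)
  rw [ncard_monicsOfNatDegree, ← ncard_squarefreeMonicsOfNatDegree_add_pow hn] at h
  exact Nat.add_left_cancel h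

theorem ncard_discrFiber_eq {m : ℕ} (hm : 0 < m)
    (hcop : Nat.Coprime (Fintype.card F - 1) (m * (m - 1))) {e e' : F} (he : e ≠ 0)
    (he' : e' ≠ 0) : (discrFiber F m e).ncard = (discrFiber F m e').ncard := by
  have hunits : (Nat.card Fˣ).Coprime (m * (m - 1)) := by
    rwa [Nat.card_eq_fintype_card, Fintype.card_units]
  obtain ⟨r, hr⟩ := (powCoprime hunits).surjective (Units.mk0 (e' / e) (div_ne_zero he' he))
  have hpow : (r : F) ^ (m * (m - 1)) * e = e' := by
    rw [← Units.val_pow_eq_pow_val, ← powCoprime_apply hunits, hr, Units.val_mk0,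
      div_mul_cancel₀ _ he]
  have hinj : Function.Injective fun f : F[X] => f.scaleRoots r :=
    Function.LeftInverse.injective (g := fun f : F[X] => f.scaleRoots (r : F)⁻¹)
      (scaleRoots_scaleRoots_inv r.ne_zero)
  rw [← hpow, ← image_scaleRoots_discrFiber hm r.ne_zero, Set.ncard_image_of_injective _ hinj]

theorem ncard_discrFiber {m : ℕ} (hm : 2 ≤ m)
    (hcop : Nat.Coprime (Fintype.card F - 1) (m * (m - 1))) (d : F) :
    (discrFiber F m d).ncard = Fintype.card F ^ (m - 1) := by
  have hzero : (discrFiber F m 0).ncard = Fintype.card F ^ (m - 1) := by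
    rw [discrFiber_zero (by omega), ncard_monicsOfNatDegree_diff_squarefree hm]
  rcases eq_or_ne d 0 with rfl | hd
  · exact hzero
  have hsum := Set.ncard_eq_sum_ncard_fiber (finite_monicsOfNatDegree (F := F) m)
    (g := discr) (t := Finset.univ) (fun _ _ => Finset.mem_coe.mpr (Finset.mem_univ _))
  change _ = ∑ e, (discrFiber F m e).ncard at hsum
  rw [ncard_monicsOfNatDegree, ← Finset.add_sum_erase _ _ (Finset.mem_univ 0), hzero,
    Finset.sum_congr rfl fun e he => ncard_discrFiber_eq (by omega) hcop
      (Finset.ne_of_mem_erase he) hd,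
    Finset.sum_const, Finset.card_erase_of_mem (Finset.mem_univ _), Finset.card_univ,
    smul_eq_mul] at hsum
  have hq : 0 < Fintype.card F - 1 := Nat.sub_pos_of_lt Fintype.one_lt_card
  have hpow : Fintype.card F ^ m =
      Fintype.card F ^ (m - 1) + (Fintype.card F - 1) * Fintype.card F ^ (m - 1) := by
    rw [← one_add_mul, Nat.add_sub_cancel' (by omega), ← pow_succ',
      Nat.sub_add_cancel (by omega)]
  exact Nat.eq_of_mul_eq_mul_left hq (Nat.add_left_cancel (hsum.symm.trans hpow))

end Counting

theorem stmt2_general {F : Type*} [Field F] [Fintype F] (q m : ℕ) (hq : Fintype.card F = q)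
    (hm : 2 ≤ m) (hgcd : Nat.gcd (q - 1) (m * (m - 1)) = 1) (d : F) :
    {f : F[X] | f.Monic ∧ f.natDegree = m ∧
        polyDisc f = algebraMap F (AlgebraicClosure F) d}.ncard = q ^ (m - 1) := by
  subst hq
  have hfiber : {f : F[X] | f.Monic ∧ f.natDegree = m ∧
      polyDisc f = algebraMap F (AlgebraicClosure F) d} = discrFiber F m d := by
    ext f
    simp only [discrFiber, monicsOfNatDegree, Set.mem_ofPred_eq, and_assoc]
    refine and_congr_right fun _ => and_congr_right fun hdeg => ?_
    rw [polyDisc_eq_algebraMap_discr (hdeg ▸ hm), (algebraMap F _).injective.eq_iff]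
  rw [hfiber, ncard_discrFiber hm hgcd]

/-- If `q` is a power of `2` and `m ≥ 2` satisfies `gcd(q-1, m(m-1)) = 1`, then every
`d ∈ F_q` is the discriminant of exactly `q^(m-1)` monic polynomials of degree `m`. -/
theorem stmt2 {F : Type*} [Field F] [Fintype F] (q m : ℕ) (hq : Fintype.card F = q)
    (h2 : ∃ n : ℕ, q = 2 ^ n) (hm : 2 ≤ m) (hgcd : Nat.gcd (q - 1) (m * (m - 1)) = 1) (d : F) :
    {f : F[X] | f.Monic ∧ f.natDegree = m ∧
        polyDisc f = algebraMap F (AlgebraicClosure F) d}.ncard = q ^ (m - 1) :=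
  stmt2_general q m hq hm hgcd d
end

section
/- Let q be a prime power, m ≥ 2 an integer, and λ a partition of m such that S_{λ,F_q} is nonempty. Then |D_{λ,F_q}| ≥ (q-1)/g, where g = gcd(q-1, m(m-1)). -/
/-!
Multiplying the roots of `f` by `c ∈ Fˣ` (`f ↦ f.scaleRoots c`) preserves the factorization
type and multiplies the discriminant by `c ^ (m(m-1))`. As `disc f ≠ 0` for separable `f`,
the discriminants of the scaled polynomials form a copy of the subgroup of `m(m-1)`-th powers
of the cyclic group `Fˣ`, which has `(q-1)/gcd(q-1, m(m-1))` elements.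
-/

open Polynomial
open scoped Classical

namespace Polynomial

section ScaleRoots

variable {R : Type*} [CommRing R] [IsDomain R]

noncomputable def scaleRootsMulEquiv (r : Rˣ) : R[X] ≃* R[X] where
  toFun p := p.scaleRoots r
  invFun p := p.scaleRoots ↑r⁻¹
  left_inv p := by simp only [← scaleRoots_mul, Units.mul_inv, scaleRoots_one]
  right_inv p := by simp only [← scaleRoots_mul, Units.inv_mul, scaleRoots_one]
  map_mul' p q := mul_scaleRoots_of_noZeroDivisors p q r

@[simp]
lemma scaleRootsMulEquiv_apply (r : Rˣ) (p : R[X]) : scaleRootsMulEquiv r p = p.scaleRoots r :=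
  rfl

end ScaleRoots

lemma finite_setOf_natDegree_le {R : Type*} [Semiring R] [Finite R] (n : ℕ) :
    {p : R[X] | p.natDegree ≤ n}.Finite := by
  have : Finite (degreeLT R (n + 1)) := .of_equiv _ (degreeLTEquiv R (n + 1)).toEquiv.symm
  refine (Set.toFinite (degreeLT R (n + 1) : Set R[X])).subset fun p hp => ?_
  rw [SetLike.mem_coe, mem_degreeLT]
  exact (degree_le_of_natDegree_le hp).trans_lt (by exact_mod_cast Nat.lt_succ_self n)

end Polynomial

namespace Multiset

variable {K : Type*} [CommRing K]

noncomputable def prodOrderedDiff (s : Multiset K) : K :=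
  (s.map fun a => ((s.erase a).map (a - ·)).prod).prod

lemma prodOrderedDiff_map_mul [IsDomain K] (s : Multiset K) {c : K} (hc : c ≠ 0) :
    (s.map (c * ·)).prodOrderedDiff = c ^ (card s * (card s - 1)) * s.prodOrderedDiff := by
  have hrow : ∀ a ∈ s, (((s.map (c * ·)).erase (c * a)).map (c * a - ·)).prod
      = c ^ (card s - 1) * ((s.erase a).map (a - ·)).prod := by
    intro a ha
    rw [← map_erase _ (mul_right_injective₀ hc), map_map]
    simp only [Function.comp_def, ← mul_sub, prod_map_mul, map_const', prod_replicate,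
      card_erase_of_mem ha, Nat.pred_eq_sub_one]
  rw [prodOrderedDiff, prodOrderedDiff, map_map, Function.comp_def, map_congr rfl hrow,
    prod_map_mul, map_const', prod_replicate, ← pow_mul, Nat.mul_comm]

lemma prodOrderedDiff_ne_zero [IsDomain K] {s : Multiset K} (hs : s.Nodup) :
    s.prodOrderedDiff ≠ 0 := by
  refine prod_ne_zero fun h => ?_
  obtain ⟨a, -, ha⟩ := mem_map.mp h
  obtain ⟨b, hb, hab⟩ := mem_map.mp (prod_eq_zero_iff.mp ha)
  exact hs.notMem_erase (sub_eq_zero.mp hab ▸ hb)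

end Multiset

section polyDisc

variable {F : Type*} [Field F]

local notation "ι" => algebraMap F (AlgebraicClosure F)

lemma polyDisc_eq_prodOrderedDiff {f : F[X]} (hf : f.Monic) (hdeg : 2 ≤ f.natDegree) :
    polyDisc f = (-1) ^ (f.natDegree * (f.natDegree - 1) / 2) *
      (f.map ι).roots.prodOrderedDiff := by
  have hsplit : f.map ι = ((f.map ι).roots.map (X - C ·)).prod :=
    (IsAlgClosed.splits _).eq_prod_roots_of_monic (hf.map ι)
  rw [polyDisc, if_neg (by omega), hf.leadingCoeff, map_one, one_pow, mul_one,
    Multiset.prodOrderedDiff]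
  congr 2
  refine Multiset.map_congr rfl fun a ha => ?_
  rw [← derivative_map, ← eval_multiset_prod_X_sub_C_derivative ha, ← hsplit]

lemma polyDisc_scaleRoots_s10 {f : F[X]} (hf : f.Monic) (hdeg : 2 ≤ f.natDegree) {c : F}
    (hc : c ≠ 0) :
    polyDisc (f.scaleRoots c) = ι c ^ (f.natDegree * (f.natDegree - 1)) * polyDisc f := by
  have hroots : ((f.scaleRoots c).map ι).roots = (f.map ι).roots.map (ι c * ·) := by
    rw [map_scaleRoots _ _ _ (by simp [hf.leadingCoeff]),
      roots_scaleRoots _ (isUnit_iff_ne_zero.mpr ((map_ne_zero ι).mpr hc))]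
  have hcard : Multiset.card (f.map ι).roots = f.natDegree := by
    rw [← (IsAlgClosed.splits _).natDegree_eq_card_roots, natDegree_map]
  rw [polyDisc_eq_prodOrderedDiff ((monic_scaleRoots_iff c).mpr hf)
      (by rwa [natDegree_scaleRoots]), polyDisc_eq_prodOrderedDiff hf hdeg,
    natDegree_scaleRoots, hroots,
    Multiset.prodOrderedDiff_map_mul _ ((map_ne_zero ι).mpr hc), hcard, mul_left_comm]

lemma polyDisc_ne_zero {f : F[X]} (hf : f.Monic) (hsep : f.Separable) : polyDisc f ≠ 0 := by
  by_cases hdeg : f.natDegree ≤ 1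
  · simp [polyDisc, hdeg]
  rw [polyDisc_eq_prodOrderedDiff hf (by omega)]
  exact mul_ne_zero (pow_ne_zero _ (neg_ne_zero.mpr one_ne_zero))
    (Multiset.prodOrderedDiff_ne_zero (nodup_roots hsep.map))

end polyDisc

namespace hasFactorizationType

variable {F : Type*} [Field F] {m : ℕ} {lam : m.Partition} {f : F[X]}

lemma monic (h : hasFactorizationType f lam) : f.Monic := by
  obtain ⟨s, hs, rfl, -⟩ := h
  exact monic_prod_of_monic s _ fun π hπ => (hs π hπ).1

lemma natDegree_eq (h : hasFactorizationType f lam) : f.natDegree = m := by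
  obtain ⟨s, hs, rfl, hdeg⟩ := h
  rw [natDegree_prod _ _ fun π hπ => (hs π hπ).2.ne_zero, Finset.sum_eq_multiset_sum, hdeg,
    lam.parts_sum]

lemma separable [PerfectField F] (h : hasFactorizationType f lam) : f.Separable := by
  obtain ⟨s, hs, rfl, -⟩ := h
  refine separable_prod' (fun π hπ ρ hρ hne => ?_) fun π hπ =>
    PerfectField.separable_of_irreducible (hs π hπ).2
  refine ((hs π hπ).2.coprime_iff_not_dvd).mpr fun hdvd => hne ?_
  exact eq_of_monic_of_associated (hs π hπ).1 (hs ρ hρ).1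
    ((hs π hπ).2.associated_of_dvd (hs ρ hρ).2 hdvd)

lemma scaleRoots (h : hasFactorizationType f lam) (c : Fˣ) :
    hasFactorizationType (f.scaleRoots c) lam := by
  obtain ⟨s, hs, rfl, hdeg⟩ := h
  set e := scaleRootsMulEquiv c
  refine ⟨s.map e.toEquiv.toEmbedding, fun π hπ => ?_, ?_, ?_⟩
  · obtain ⟨ρ, hρ, rfl⟩ := Finset.mem_map.mp hπ
    exact ⟨(monic_scaleRoots_iff _).mpr (hs ρ hρ).1, (MulEquiv.irreducible_iff e).mpr (hs ρ hρ).2⟩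
  · rw [Finset.prod_map, ← scaleRootsMulEquiv_apply, map_prod]
    rfl
  · simp only [Finset.map_val, Multiset.map_map, ← hdeg]
    exact Multiset.map_congr rfl fun π _ => natDegree_scaleRoots π c

end hasFactorizationType

lemma finite_setOf_hasFactorizationType {F : Type*} [Field F] [Finite F] {m : ℕ}
    (lam : m.Partition) : {f : F[X] | hasFactorizationType f lam}.Finite :=
  (finite_setOf_natDegree_le m).subset fun _ hf => hf.natDegree_eq.le

/-- If `λ` is a partition of `m ≥ 2` such that `S_{λ,F_q}` is nonempty, then the set
`D_{λ,F_q}` of discriminants of polynomials in `S_{λ,F_q}` has at least `(q-1)/g` elements,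
where `g = gcd(q-1, m(m-1))`. -/
theorem stmt10 {F : Type*} [Field F] [Fintype F] (q m : ℕ) (hq : Fintype.card F = q)
    (hm : 2 ≤ m) (lam : m.Partition) (hne : ∃ f : F[X], hasFactorizationType f lam) :
    (q - 1) / Nat.gcd (q - 1) (m * (m - 1)) ≤
      (polyDisc '' {f : F[X] | hasFactorizationType f lam}).ncard := by
  obtain ⟨f₀, hf₀⟩ := hne
  have hdeg : 2 ≤ f₀.natDegree := hf₀.natDegree_eq ▸ hm
  set ι := algebraMap F (AlgebraicClosure F)
  set P := (powMonoidHom (m * (m - 1)) : Fˣ →* Fˣ).range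
  have hmaps : Set.MapsTo (fun u : Fˣ => ι u * polyDisc f₀) P
      (polyDisc '' {f | hasFactorizationType f lam}) := by
    rintro _ ⟨c, rfl⟩
    refine ⟨f₀.scaleRoots c, hf₀.scaleRoots c, ?_⟩
    simp [polyDisc_scaleRoots_s10 hf₀.monic hdeg c.ne_zero, hf₀.natDegree_eq, ι]
  have hinj : Set.InjOn (fun u : Fˣ => ι u * polyDisc f₀) P := fun u _ v _ huv =>
    Units.ext (ι.injective (mul_right_cancel₀ (polyDisc_ne_zero hf₀.monic hf₀.separable) huv))
  have hcard : Nat.card Fˣ = q - 1 := by rw [Nat.card_eq_fintype_card, Fintype.card_units, hq]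
  calc (q - 1) / Nat.gcd (q - 1) (m * (m - 1)) = Nat.card P := by
        rw [IsCyclic.card_powMonoidHom_range, hcard]
    _ = (P : Set Fˣ).ncard := Nat.card_coe_set_eq _
    _ ≤ _ := Set.ncard_le_ncard_of_injOn _ hmaps hinj
        ((finite_setOf_hasFactorizationType lam).image _)
end

section
/- Let q be an odd prime power and m ≥ 2 an integer with gcd(q-1, m(m-1)) = 2, and let λ be a partition of m with k parts such that S_{λ,F_q} is nonempty. Then D_{λ,F_q} = {d ∈ F_q^× : χ_q(d) = (-1)^(m-k)}, and for any two elements δ_1, δ_2 of this set, the number of polynomials in S_{λ,F_q} with discriminant δ_1 equals the number with discriminant δ_2. -/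
open Polynomial
open scoped Classical

section Aux
variable {F : Type*} [Field F] [Fintype F]

local notation "K" => AlgebraicClosure F
local notation "ι" => algebraMap F (AlgebraicClosure F)

lemma exists_frobK : ∃ φ : (AlgebraicClosure F) →+* (AlgebraicClosure F),
    ∀ x, φ x = x ^ Fintype.card F := by
  set p := ringChar F with hp
  haveI : Fact p.Prime := ⟨CharP.char_is_prime F p⟩
  haveI : CharP (AlgebraicClosure F) p :=
    charP_of_injective_algebraMap (algebraMap F (AlgebraicClosure F)).injective p
  obtain ⟨n, hprime, hcard⟩ := FiniteField.card F p
  exact ⟨iterateFrobenius (AlgebraicClosure F) p n, fun x => by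
    rw [iterateFrobenius_def, hcard]⟩

lemma mem_range_iff_pow_card (x : K) :
    x ^ (Fintype.card F) = x ↔ x ∈ Set.range ι := by
  constructor
  · intro hx
    set q := Fintype.card F with hq
    have hq2 : 2 ≤ q := Fintype.one_lt_card
    have hq0 : q ≠ 0 := by omega
    set P : (AlgebraicClosure F)[X] := (X ^ q - X : F[X]).map ι with hP
    have hdeg : (X ^ q - X : F[X]).natDegree = q := by
      compute_degree!
      · simp only [Int.subNatNat_eq_coe]
        split <;> [omega; simp]
      · omega
    have hPdeg : P.natDegree = q := by
      rw [hP, natDegree_map, hdeg]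
    have hPne : P ≠ 0 := fun h => by simp [h] at hPdeg; omega
    have hroots : (Multiset.map ι Finset.univ.val) ≤ P.roots := by
      rw [Multiset.le_iff_subset (Finset.univ.nodup.map (algebraMap F _).injective)]
      intro y hy
      obtain ⟨a, _, rfl⟩ := Multiset.mem_map.1 hy
      rw [mem_roots hPne]
      simp only [P, IsRoot, eval_map, eval₂_sub, eval₂_X_pow, eval₂_X]
      rw [← map_pow, FiniteField.pow_card, sub_self]
    have hcard : P.roots = Multiset.map ι Finset.univ.val := by
      refine (Multiset.eq_of_le_of_card_le hroots ?_).symm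
      refine le_trans (P.card_roots') ?_
      rw [hPdeg, Multiset.card_map]
      simp [hq]
    have hxr : x ∈ P.roots := by
      rw [mem_roots hPne]
      simp only [P, IsRoot, eval_map, eval₂_sub, eval₂_X_pow, eval₂_X]
      rw [hx, sub_self]
    rw [hcard] at hxr
    obtain ⟨a, _, rfl⟩ := Multiset.mem_map.1 hxr
    exact ⟨a, rfl⟩
  · rintro ⟨a, rfl⟩
    rw [← map_pow, FiniteField.pow_card]

lemma descent (g : (AlgebraicClosure F)[X])
    (hg : ∀ n : ℕ, (g.coeff n) ^ (Fintype.card F) = g.coeff n) :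
    ∃ h : F[X], h.map ι = g :=
  (lifts_iff_coeff_lifts g).mpr (fun n => (mem_range_iff_pow_card _).1 (hg n))

lemma exists_perm {n : ℕ} (v : Fin n → K) (hv : Function.Injective v)
    (g : (AlgebraicClosure F) → (AlgebraicClosure F)) (hg : Function.Injective g)
    (hstab : ∀ i, ∃ j, g (v i) = v j) :
    ∃ σ : Equiv.Perm (Fin n), ∀ i, g (v i) = v (σ i) := by
  choose τ hτ using hstab
  have hτinj : Function.Injective τ := by
    intro i j h
    apply hv; apply hg
    rw [hτ, hτ, h]
  exact ⟨Equiv.ofBijective τ (Finite.injective_iff_bijective.1 hτinj),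
    fun i => by rw [hτ i]; rfl⟩

end Aux

section Orbit
open IntermediateField
variable {F : Type*} [Field F] [Fintype F]

local notation "K" => AlgebraicClosure F
local notation "ι" => algebraMap F (AlgebraicClosure F)

lemma rot_lemma {n : ℕ} (hn : 0 < n) :
    (∀ i : Fin n, ((finRotate n) i : ℕ) = ((i : ℕ) + 1) % n) ∧
      Equiv.Perm.sign (finRotate n) = (-1) ^ (n - 1) := by
  obtain ⟨m, rfl⟩ := Nat.exists_eq_succ_of_ne_zero hn.ne'
  refine ⟨fun i => ?_, by simpa using sign_finRotate m⟩
  rw [finRotate_succ_apply]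
  simp [Fin.val_add, Fin.val_one', Nat.add_mod]

lemma irreducible_orbit (φ : (AlgebraicClosure F) →+* (AlgebraicClosure F))
    (hφ : ∀ x, φ x = x ^ Fintype.card F)
    (π : F[X]) (hmon : π.Monic) (hirr : Irreducible π) :
    ∃ (n : ℕ) (v : Fin n → K) (σ : Equiv.Perm (Fin n)),
      n = π.natDegree ∧ Function.Injective v ∧
      π.map ι = ∏ i, (X - C (v i)) ∧
      (∀ i, φ (v i) = v (σ i)) ∧ Equiv.Perm.sign σ = (-1) ^ (n - 1) ∧ 1 ≤ n := by
  set q := Fintype.card F with hq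
  have hd : 0 < π.natDegree := hirr.natDegree_pos
  obtain ⟨α, hα⟩ := IsAlgClosed.exists_aeval_eq_zero (AlgebraicClosure F) π
    (by rw [degree_eq_natDegree hmon.ne_zero]
        exact_mod_cast (by omega : π.natDegree ≠ 0))
  have hmin : π = minpoly F α := minpoly.eq_of_irreducible_of_monic hirr hα hmon
  have hint : IsIntegral F α := ⟨π, hmon, hα⟩
  -- α ^ q ^ d = α
  have hαpow : α ^ q ^ π.natDegree = α := by
    haveI := IntermediateField.adjoin.finiteDimensional hint
    haveI : Finite (F⟮α⟯ : IntermediateField F (AlgebraicClosure F)) :=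
      Module.finite_of_finite F
    haveI : Fintype (F⟮α⟯ : IntermediateField F (AlgebraicClosure F)) := Fintype.ofFinite _
    have hcardE : Fintype.card (F⟮α⟯ : IntermediateField F (AlgebraicClosure F)) =
        q ^ π.natDegree := by
      have h1 : Fintype.card (F⟮α⟯ : IntermediateField F (AlgebraicClosure F)) =
          Fintype.card F ^ Module.finrank F (F⟮α⟯ : IntermediateField F (AlgebraicClosure F)) :=
        Module.card_eq_pow_finrank
      rw [h1, IntermediateField.adjoin.finrank hint, ← hmin, hq]
    have h2 := FiniteField.pow_card (IntermediateField.AdjoinSimple.gen F α)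
    rw [hcardE] at h2
    have h3 := congrArg (fun y : (F⟮α⟯ : IntermediateField F (AlgebraicClosure F)) =>
      (y : AlgebraicClosure F)) h2
    simpa [IntermediateField.AdjoinSimple.coe_gen] using h3
  have φiter : ∀ (j : ℕ) (x : AlgebraicClosure F), φ^[j] x = x ^ q ^ j := by
    intro j
    induction j with
    | zero => simp
    | succ j ih =>
      intro x
      rw [Function.iterate_succ_apply', ih, hφ, ← pow_mul, pow_succ]
  have hper : Function.IsPeriodicPt φ π.natDegree α := by
    show φ^[π.natDegree] α = α
    rw [φiter]; exact hαpow
  set e := Function.minimalPeriod φ α with he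
  have he1 : 0 < e := hper.minimalPeriod_pos hd
  have hele : e ≤ π.natDegree := hper.minimalPeriod_le hd
  have key : ∀ a : ℕ, φ^[a % e] α = φ^[a] α := fun a =>
    Function.iterate_mod_minimalPeriod_eq
  set v : Fin e → K := fun i => φ^[(i : ℕ)] α with hv
  have hvinj : Function.Injective v := by
    intro i j h
    have := Function.iterate_injOn_Iio_minimalPeriod (f := φ) (x := α)
      (Set.mem_Iio.2 i.isLt) (Set.mem_Iio.2 j.isLt) h
    exact Fin.ext this
  obtain ⟨hrotval, hrotsign⟩ := rot_lemma he1
  have hrot : ∀ i, φ (v i) = v ((finRotate e) i) := by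
    intro i
    show φ (φ^[(i : ℕ)] α) = φ^[((finRotate e i) : ℕ)] α
    rw [hrotval i, key, ← Function.iterate_succ_apply' φ]
  -- the product polynomial descends
  set g : (AlgebraicClosure F)[X] := ∏ i, (X - C (v i)) with hg
  have hmapg : g.map φ = g := by
    rw [hg, Polynomial.map_prod]
    simp only [Polynomial.map_sub, map_X, map_C]
    rw [← Equiv.prod_comp (finRotate e) (fun i => X - C (v i))]
    exact Finset.prod_congr rfl fun i _ => by rw [hrot]
  obtain ⟨h, hh⟩ := descent g (fun n => by
    rw [← hφ]
    have := congrArg (fun P => Polynomial.coeff P n) hmapg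
    simpa [coeff_map] using this)
  have hgmonic : g.Monic := monic_prod_of_monic _ _ fun i _ => monic_X_sub_C _
  have hhm : h.Monic := by
    have h1 : (h.map ι).leadingCoeff = 1 := by rw [hh]; exact hgmonic
    rwa [leadingCoeff_map, ← map_one ι, (algebraMap F (AlgebraicClosure F)).injective.eq_iff] at h1
  have hgdeg : g.natDegree = e := by
    rw [hg, natDegree_prod _ _ (fun i _ => X_sub_C_ne_zero (v i))]
    simp
  have hhdeg : h.natDegree = e := by
    rw [← hgdeg, ← hh, natDegree_map]
  have haevalh : Polynomial.aeval α h = 0 := by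
    rw [aeval_def, ← eval_map, hh, hg, eval_prod]
    refine Finset.prod_eq_zero (Finset.mem_univ (⟨0, he1⟩ : Fin e)) ?_
    have hv0 : v ⟨0, he1⟩ = α := by simp [hv]
    simp [hv0]
  have hdvd : π ∣ h := hmin ▸ minpoly.dvd F α haevalh
  have hde : e = π.natDegree := by
    have : π.natDegree ≤ h.natDegree := natDegree_le_of_dvd hdvd hhm.ne_zero
    omega
  have hπh : π = h := by
    obtain ⟨c, hc⟩ := hdvd
    have hcne : c ≠ 0 := fun h0 => by simp [h0] at hc; exact hhm.ne_zero hc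
    have hcdeg : c.natDegree = 0 := by
      have := natDegree_mul hmon.ne_zero hcne
      rw [← hc, hhdeg, hde] at this
      omega
    have : c = C (c.coeff 0) := eq_C_of_natDegree_eq_zero hcdeg
    have hlc := congrArg leadingCoeff hc
    rw [hhm.leadingCoeff, leadingCoeff_mul, hmon.leadingCoeff, one_mul, this,
      leadingCoeff_C] at hlc
    rw [hc, this, ← hlc, map_one, mul_one]
  refine ⟨e, v, finRotate e, hde, hvinj, ?_, hrot, hrotsign, he1⟩
  rw [hπh, hh]
end Orbit

section Key
variable {F : Type*} [Field F] [Fintype F]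
local notation "K" => AlgebraicClosure F
local notation "ι" => algebraMap F (AlgebraicClosure F)

lemma key_induction (φ : (AlgebraicClosure F) →+* (AlgebraicClosure F))
    (hφ : ∀ x, φ x = x ^ Fintype.card F)
    (s : Finset F[X]) (hs : ∀ π ∈ s, π.Monic ∧ Irreducible π) :
    ∃ (n : ℕ) (v : Fin n → K) (σ : Equiv.Perm (Fin n)),
      n = (∏ π ∈ s, π).natDegree ∧ s.card ≤ n ∧ Function.Injective v ∧
      (∏ π ∈ s, π).map ι = ∏ i, (X - C (v i)) ∧
      (∀ i, φ (v i) = v (σ i)) ∧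
      Equiv.Perm.sign σ = (-1) ^ (n - s.card) := by
  induction s using Finset.induction_on with
  | empty =>
    exact ⟨0, Fin.elim0, 1, by simp, by simp, fun i j => (i.elim0),
      by simp [Polynomial.map_one], fun i => i.elim0, by simp⟩
  | @insert a s ha ih =>
    obtain ⟨hmon, hirr⟩ := hs a (Finset.mem_insert_self a s)
    have hs' : ∀ π ∈ s, π.Monic ∧ Irreducible π :=
      fun π hπ => hs π (Finset.mem_insert_of_mem hπ)
    obtain ⟨n₂, v₂, σ₂, hn₂, hcard₂, hinj₂, hprod₂, hcomm₂, hsign₂⟩ := ih hs'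
    obtain ⟨d, v₁, σ₁, hd, hinj₁, hprod₁, hcomm₁, hsign₁, hd1⟩ :=
      irreducible_orbit φ hφ a hmon hirr
    have hgm : (∏ π ∈ s, π).Monic := monic_prod_of_monic _ _ fun π hπ => (hs' π hπ).1
    have hprodins : (∏ π ∈ insert a s, π) = a * ∏ π ∈ s, π := Finset.prod_insert ha
    -- not dvd
    have hnot : ¬ a ∣ ∏ π ∈ s, π := by
      intro hdvd
      obtain ⟨π', hπ', hdvd'⟩ := hirr.prime.exists_mem_finset_dvd hdvd
      have := Polynomial.eq_of_monic_of_associated hmon (hs' π' hπ').1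
        (hirr.associated_of_dvd (hs' π' hπ').2 hdvd')
      exact ha (this ▸ hπ')
    have hcop : IsCoprime (Polynomial.map ι a) (Polynomial.map ι (∏ π ∈ s, π)) :=
      ((hirr.coprime_iff_not_dvd).mpr hnot).map (mapRingHom ι)
    have hdisj : ∀ (i : Fin d) (j : Fin n₂), v₁ i ≠ v₂ j := by
      intro i j hij
      obtain ⟨u, w, huw⟩ := hcop
      have h1 : eval (v₁ i) (Polynomial.map ι a) = 0 := by
        rw [hprod₁, eval_prod]
        exact Finset.prod_eq_zero (Finset.mem_univ i) (by simp)
      have h2 : eval (v₁ i) (Polynomial.map ι (∏ π ∈ s, π)) = 0 := by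
        rw [hprod₂, eval_prod]
        exact Finset.prod_eq_zero (Finset.mem_univ j) (by simp [hij])
      have := congrArg (eval (v₁ i)) huw
      simp [h1, h2] at this
    set v : Fin (d + n₂) → AlgebraicClosure F := Fin.append v₁ v₂ with hv
    have hcases : ∀ i : Fin (d + n₂),
        (∃ j, i = Fin.castAdd n₂ j) ∨ (∃ j, i = Fin.natAdd d j) :=
      fun i => Fin.addCases (fun j => Or.inl ⟨j, rfl⟩) (fun j => Or.inr ⟨j, rfl⟩) i
    have hinj : Function.Injective v := by
      intro i j h
      rcases hcases i with ⟨i', rfl⟩ | ⟨i', rfl⟩ <;> rcases hcases j with ⟨j', rfl⟩ | ⟨j', rfl⟩ <;>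
        simp only [hv, Fin.append_left, Fin.append_right] at h
      · rw [hinj₁ h]
      · exact absurd h (hdisj i' j')
      · exact absurd h.symm (hdisj j' i')
      · rw [hinj₂ h]
    set σ : Equiv.Perm (Fin (d + n₂)) :=
      (finSumFinEquiv.permCongr (Equiv.Perm.sumCongr σ₁ σ₂)) with hσ
    have hσl : ∀ i : Fin d, σ (Fin.castAdd n₂ i) = Fin.castAdd n₂ (σ₁ i) := by
      intro i
      simp [hσ, Equiv.permCongr_apply]
    have hσr : ∀ i : Fin n₂, σ (Fin.natAdd d i) = Fin.natAdd d (σ₂ i) := by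
      intro i
      simp [hσ, Equiv.permCongr_apply]
    refine ⟨d + n₂, v, σ, ?_, ?_, hinj, ?_, ?_, ?_⟩
    · rw [hprodins, natDegree_mul hmon.ne_zero hgm.ne_zero, hd, hn₂]
    · rw [Finset.card_insert_of_notMem ha]; omega
    · rw [hprodins, Polynomial.map_mul, hprod₁, hprod₂, Fin.prod_univ_add]
      congr 1
      · exact Finset.prod_congr rfl fun i _ => by rw [hv, Fin.append_left]
      · exact Finset.prod_congr rfl fun i _ => by rw [hv, Fin.append_right]
    · intro i
      rcases hcases i with ⟨i', rfl⟩ | ⟨i', rfl⟩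
      · rw [hσl]
        simp only [hv, Fin.append_left]
        exact hcomm₁ i'
      · rw [hσr]
        simp only [hv, Fin.append_right]
        exact hcomm₂ i'
    · rw [hσ, Equiv.Perm.sign_permCongr, Equiv.Perm.sign_sumCongr, hsign₁, hsign₂,
        Finset.card_insert_of_notMem ha, ← pow_add]
      congr 1
      omega
end Key

section DiscA
variable {F : Type*} [Field F] [Fintype F]
local notation "K" => AlgebraicClosure F
local notation "ι" => algebraMap F (AlgebraicClosure F)

lemma half_sum {n : ℕ} : ∑ j : Fin n, (Finset.Ioi j).card = n * (n - 1) / 2 := by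
  have h1 : ∑ j : Fin n, (Finset.Ioi j).card = ∑ j ∈ Finset.range n, (n - 1 - j) := by
    rw [← Fin.sum_univ_eq_sum_range (fun j => n - 1 - j) n]
    exact Finset.sum_congr rfl fun j _ => Fin.card_Ioi j
  rw [h1, Finset.sum_range_reflect (fun j => j) n]
  have := Finset.sum_range_id_mul_two n
  omega

lemma erase_eq_Iio_Ioi {n : ℕ} (j : Fin n) :
    Finset.univ.erase j = Finset.Iio j ∪ Finset.Ioi j := by
  ext x
  simp only [Finset.mem_erase, Finset.mem_univ, and_true, Finset.mem_union, Finset.mem_Iio,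
    Finset.mem_Ioi]
  exact ne_iff_lt_or_gt

lemma discA (φ : (AlgebraicClosure F) →+* (AlgebraicClosure F))
    (hφ : ∀ x, φ x = x ^ Fintype.card F)
    (s : Finset F[X]) (hs : ∀ π ∈ s, π.Monic ∧ Irreducible π)
    (hm2 : 2 ≤ (∏ π ∈ s, π).natDegree) :
    ∃ (d : F) (Δ : AlgebraicClosure F), d ≠ 0 ∧
      (ι d : AlgebraicClosure F) = polyDisc (∏ π ∈ s, π) ∧ Δ ≠ 0 ∧ Δ ^ 2 = ι d ∧
      φ Δ = (-1 : AlgebraicClosure F) ^ ((∏ π ∈ s, π).natDegree - s.card) * Δ := by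
  obtain ⟨n, v, σ, hn, hcard, hinj, hprod, hcomm, hsign⟩ := key_induction φ hφ s hs
  set f := ∏ π ∈ s, π with hf
  have hfm : f.Monic := monic_prod_of_monic _ _ fun π hπ => (hs π hπ).1
  set m := f.natDegree with hm
  set S : Multiset (AlgebraicClosure F) := Multiset.map v Finset.univ.val with hS
  have hfS : f.map ι = (S.map (fun a => X - C a)).prod := by
    rw [hprod, hS, Multiset.map_map, Finset.prod_eq_multiset_prod]
    rfl
  have hroots : (f.map ι).roots = S := by rw [hfS, roots_multiset_prod_X_sub_C]
  set Δ : AlgebraicClosure F := (Matrix.vandermonde v).det with hΔ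
  have hΔne : Δ ≠ 0 := Matrix.det_vandermonde_ne_zero_iff.mpr hinj
  -- the evaluation of the derivative at each root
  have heval : ∀ j : Fin n, eval (v j) (derivative (f.map ι)) =
      ∏ i ∈ Finset.univ.erase j, (v j - v i) := by
    intro j
    have hvj : v j ∈ S := by
      rw [hS]; exact Multiset.mem_map_of_mem v (Finset.mem_univ j)
    rw [hfS, eval_multiset_prod_X_sub_C_derivative hvj]
    have herase : S.erase (v j) = Multiset.map v (Finset.univ.erase j).val := by
      rw [Finset.erase_val, Multiset.map_erase v hinj]
    rw [herase, Multiset.map_map, ← Finset.prod_eq_multiset_prod]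
    rfl
  -- the total product
  have htot : (Multiset.map (fun a => eval a (map ι (derivative f))) (f.map ι).roots).prod
      = Δ * ((-1 : AlgebraicClosure F) ^ (m * (m - 1) / 2) * Δ) := by
    rw [← derivative_map, hroots, hS, Multiset.map_map, ← Finset.prod_eq_multiset_prod]
    have h1 : ∀ j ∈ Finset.univ, ((fun a => eval a (derivative (f.map ι))) ∘ v) j
        = ∏ i ∈ Finset.univ.erase j, (v j - v i) := fun j _ => heval j
    rw [Finset.prod_congr rfl h1]
    have hsplit : ∀ j : Fin n, ∏ i ∈ Finset.univ.erase j, (v j - v i) =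
        (∏ i ∈ Finset.Iio j, (v j - v i)) * ∏ i ∈ Finset.Ioi j, (v j - v i) := by
      intro j
      have hdis : Disjoint (Finset.Iio j) (Finset.Ioi j) := by
        simp only [Finset.disjoint_left, Finset.mem_Iio, Finset.mem_Ioi]
        intro a ha1 ha2
        exact absurd (ha1.trans ha2) (lt_irrefl _)
      rw [erase_eq_Iio_Ioi, Finset.prod_union hdis]
    rw [Finset.prod_congr rfl fun j _ => hsplit j, Finset.prod_mul_distrib]
    congr 1
    · -- lower half equals Δ
      rw [hΔ, Matrix.det_vandermonde]
      exact Finset.prod_comm' (fun x y => by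
        simp only [Finset.mem_univ, true_and, Finset.mem_Iio, Finset.mem_Ioi, and_true])
    · -- upper half equals (-1)^N * Δ
      have h2 : ∀ j : Fin n, ∏ i ∈ Finset.Ioi j, (v j - v i) =
          (-1 : AlgebraicClosure F) ^ (Finset.Ioi j).card * ∏ i ∈ Finset.Ioi j, (v i - v j) := by
        intro j
        rw [← Finset.prod_const, ← Finset.prod_mul_distrib]
        exact Finset.prod_congr rfl fun i _ => by ring
      rw [Finset.prod_congr rfl fun j _ => h2 j, Finset.prod_mul_distrib,
        Finset.prod_pow_eq_pow_sum]
      congr 1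
      · rw [half_sum, hn]
      · rw [hΔ, Matrix.det_vandermonde]
  -- polyDisc f = Δ ^ 2
  have hdisc : polyDisc f = Δ ^ 2 := by
    rw [polyDisc, if_neg (by omega : ¬ f.natDegree ≤ 1)]
    rw [hfm.leadingCoeff, map_one, one_pow, mul_one, htot, ← hm]
    have h4 : (-1 : AlgebraicClosure F) ^ (m * (m - 1) / 2) *
        (-1 : AlgebraicClosure F) ^ (m * (m - 1) / 2) = 1 := by
      rw [← pow_add, ← two_mul, pow_mul]; norm_num
    rw [show (-1 : AlgebraicClosure F) ^ (m * (m - 1) / 2) *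
        (Δ * ((-1 : AlgebraicClosure F) ^ (m * (m - 1) / 2) * Δ)) =
        ((-1 : AlgebraicClosure F) ^ (m * (m - 1) / 2) *
          (-1 : AlgebraicClosure F) ^ (m * (m - 1) / 2)) * (Δ * Δ) by ring, h4, one_mul, sq]
  -- Frobenius action on Δ
  have hφΔ : φ Δ = (-1 : AlgebraicClosure F) ^ (m - s.card) * Δ := by
    have h3 : φ Δ = ((Matrix.vandermonde v).submatrix σ id).det := by
      rw [hΔ, RingHom.map_det, RingHom.mapMatrix_apply]
      congr 1
      ext i j
      simp [Matrix.vandermonde, Matrix.map_apply, Matrix.submatrix_apply, map_pow, hcomm i]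
    rw [h3, Matrix.det_permute, hsign]
    push_cast
    have hexp : n - s.card = m - s.card := by omega
    rw [hexp, ← hΔ]
  -- produce d
  have hfix : (Δ ^ 2) ^ (Fintype.card F) = Δ ^ 2 := by
    have : φ (Δ ^ 2) = Δ ^ 2 := by
      rw [map_pow, hφΔ, mul_pow, ← pow_mul, pow_mul']
      norm_num
    rw [← hφ]; exact this
  obtain ⟨d, hd⟩ := (mem_range_iff_pow_card (Δ ^ 2)).mp hfix
  refine ⟨d, Δ, ?_, ?_, hΔne, hd.symm, hφΔ⟩
  · intro h0
    rw [h0, map_zero] at hd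
    have : Δ ^ 2 = 0 := hd.symm
    exact hΔne (by simpa using this)
  · rw [hd, ← hdisc]
end DiscA

section Scale
variable {F : Type*} [Field F]

local notation "K" => AlgebraicClosure F
local notation "ι" => algebraMap F (AlgebraicClosure F)

/-- The root-scaling map `f(x) ↦ c^(deg f) f(x/c)`. -/
noncomputable def scaleMap (c : F) (f : F[X]) : F[X] :=
  C (c ^ f.natDegree) * f.comp (C c⁻¹ * X)

variable {c : F} (hc : c ≠ 0)

include hc

lemma natDegree_CXlin : (C c⁻¹ * X : F[X]).natDegree = 1 := by
  rw [natDegree_C_mul (inv_ne_zero hc), natDegree_X]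

lemma scaleMap_natDegree (f : F[X]) (hf : f ≠ 0) : (scaleMap c f).natDegree = f.natDegree := by
  rw [scaleMap, natDegree_C_mul (pow_ne_zero _ hc), natDegree_comp, natDegree_CXlin hc, mul_one]

lemma scaleMap_leadingCoeff (f : F[X]) (hf : f ≠ 0) :
    (scaleMap c f).leadingCoeff = f.leadingCoeff := by
  have h1 : (C c⁻¹ * X : F[X]).natDegree ≠ 0 := by rw [natDegree_CXlin hc]; omega
  rw [scaleMap, leadingCoeff_mul, leadingCoeff_C, leadingCoeff_comp h1]
  have h2 : (C c⁻¹ * X : F[X]).leadingCoeff = c⁻¹ := by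
    rw [leadingCoeff_mul, leadingCoeff_C, leadingCoeff_X, mul_one]
  rw [h2, ← mul_assoc, mul_comm (c ^ f.natDegree), mul_assoc, ← mul_pow]
  field_simp
  rw [one_pow, mul_one]

lemma scaleMap_ne_zero (f : F[X]) (hf : f ≠ 0) : scaleMap c f ≠ 0 := by
  intro h
  have := scaleMap_leadingCoeff hc f hf
  rw [h, leadingCoeff_zero] at this
  exact hf (leadingCoeff_eq_zero.mp this.symm)

lemma scaleMap_monic (f : F[X]) (hf : f.Monic) : (scaleMap c f).Monic := by
  have : (scaleMap c f).leadingCoeff = 1 := by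
    rw [scaleMap_leadingCoeff hc f hf.ne_zero, hf.leadingCoeff]
  exact this

lemma scaleMap_mul (f g : F[X]) (hf : f ≠ 0) (hg : g ≠ 0) :
    scaleMap c (f * g) = scaleMap c f * scaleMap c g := by
  rw [scaleMap, scaleMap, scaleMap, natDegree_mul hf hg, pow_add, C_mul, mul_comp]
  ring

lemma scaleMap_one : scaleMap c (1 : F[X]) = 1 := by
  simp [scaleMap]

lemma scaleMap_scaleMap (f : F[X]) (hf : f ≠ 0) : scaleMap c⁻¹ (scaleMap c f) = f := by
  rw [scaleMap, scaleMap_natDegree hc f hf, scaleMap, mul_comp, C_comp, comp_assoc]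
  have h1 : (C c⁻¹ * X : F[X]).comp (C c⁻¹⁻¹ * X) = X := by
    rw [mul_comp, C_comp, X_comp, inv_inv, ← mul_assoc, ← C_mul, inv_mul_cancel₀ hc, C_1,
      one_mul]
  rw [h1, comp_X, ← mul_assoc, ← C_mul, ← mul_pow, inv_mul_cancel₀ hc, one_pow, C_1, one_mul]

lemma scaleMap_injective : Function.Injective (scaleMap c : F[X] → F[X]) := by
  intro a b h
  have hz : scaleMap c (0 : F[X]) = 0 := by
    rw [scaleMap, natDegree_zero, pow_zero, C_1, one_mul, zero_comp]
  by_cases ha : a = 0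
  · by_cases hb : b = 0
    · rw [ha, hb]
    · rw [ha, hz] at h
      exact absurd h.symm (scaleMap_ne_zero hc b hb)
  · by_cases hb : b = 0
    · rw [hb, hz] at h
      exact absurd h (scaleMap_ne_zero hc a ha)
    · rw [← scaleMap_scaleMap hc a ha, h, scaleMap_scaleMap hc b hb]

lemma scaleMap_irreducible (π : F[X]) (hπ : Irreducible π) : Irreducible (scaleMap c π) := by
  -- the composition map is a ring equivalence
  set e : F[X] ≃+* F[X] :=
    { toFun := fun f => f.comp (C c⁻¹ * X)
      invFun := fun f => f.comp (C c * X)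
      left_inv := fun f => by
        show (f.comp (C c⁻¹ * X)).comp (C c * X) = f
        rw [comp_assoc, mul_comp, C_comp, X_comp,
          show (C c⁻¹ : F[X]) * (C c * X) = X by
            rw [← mul_assoc, ← C_mul, inv_mul_cancel₀ hc, C_1, one_mul]]
        exact comp_X
      right_inv := fun f => by
        show (f.comp (C c * X)).comp (C c⁻¹ * X) = f
        rw [comp_assoc, mul_comp, C_comp, X_comp,
          show (C c : F[X]) * (C c⁻¹ * X) = X by
            rw [← mul_assoc, ← C_mul, mul_inv_cancel₀ hc, C_1, one_mul]]
        exact comp_X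
      map_mul' := fun f g => mul_comp f g _
      map_add' := fun f g => add_comp } with he
  have hirr2 : Irreducible (π.comp (C c⁻¹ * X)) := (MulEquiv.irreducible_iff e.toMulEquiv).mpr hπ
  have hassoc : Associated (π.comp (C c⁻¹ * X)) (scaleMap c π) := by
    refine ⟨(Polynomial.isUnit_C.mpr ((pow_ne_zero π.natDegree hc).isUnit)).unit, ?_⟩
    rw [IsUnit.unit_spec, scaleMap, mul_comm]
  exact hassoc.irreducible hirr2

end Scale

section Scale2
variable {F : Type*} [Field F]
local notation "ι" => algebraMap F (AlgebraicClosure F)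
variable {c : F} (hc : c ≠ 0)
include hc

lemma scaleMap_finset_prod (s : Finset F[X]) (h0 : ∀ π ∈ s, π ≠ 0) :
    scaleMap c (∏ π ∈ s, π) = ∏ π ∈ s, scaleMap c π := by
  induction s using Finset.induction_on with
  | empty => simpa using scaleMap_one hc
  | @insert a s ha ih =>
    rw [Finset.prod_insert ha, Finset.prod_insert ha,
      scaleMap_mul hc _ _ (h0 a (Finset.mem_insert_self a s))
        (Finset.prod_ne_zero_iff.mpr fun π hπ => h0 π (Finset.mem_insert_of_mem hπ)),
      ih fun π hπ => h0 π (Finset.mem_insert_of_mem hπ)]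

lemma scaleMap_hasFactorizationType {m : ℕ} (lam : m.Partition) (f : F[X])
    (h : hasFactorizationType f lam) : hasFactorizationType (scaleMap c f) lam := by
  obtain ⟨s, hs, hprod, hdeg⟩ := h
  refine ⟨s.image (scaleMap c), ?_, ?_, ?_⟩
  · intro π' hπ'
    obtain ⟨π, hπ, rfl⟩ := Finset.mem_image.mp hπ'
    exact ⟨scaleMap_monic hc π (hs π hπ).1, scaleMap_irreducible hc π (hs π hπ).2⟩
  · rw [Finset.prod_image (fun a _ b _ h => scaleMap_injective hc h), ← hprod,
      scaleMap_finset_prod hc s (fun π hπ => (hs π hπ).2.ne_zero)]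
  · rw [Finset.image_val_of_injOn (Set.injOn_of_injective (scaleMap_injective hc)),
      Multiset.map_map]
    rw [← hdeg]
    apply Multiset.map_congr rfl
    intro π hπ
    exact scaleMap_natDegree hc π (hs π (by exact hπ)).2.ne_zero

lemma scaleMap_polyDisc (f : F[X]) (hf : f.Monic) (hm2 : 2 ≤ f.natDegree) :
    polyDisc (scaleMap c f) =
      (ι (c ^ (f.natDegree * (f.natDegree - 1))) : AlgebraicClosure F) * polyDisc f := by
  have hcK : (ι c : AlgebraicClosure F) ≠ 0 := fun h =>
    hc ((algebraMap F (AlgebraicClosure F)).injective (by rw [h, map_zero]))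
  set m := f.natDegree with hm
  set fK := f.map ι with hfK
  have hfKm : fK.Monic := hf.map ι
  have hfKdeg : fK.natDegree = m := hf.natDegree_map ι
  have hfKprod : fK = (fK.roots.map fun a => X - C a).prod :=
    (IsAlgClosed.splits fK).eq_prod_roots_of_monic hfKm
  set R := fK.roots with hR
  have hcount : Multiset.card R = m := by
    have := congrArg natDegree hfKprod
    rw [natDegree_multiset_prod_X_sub_C_eq_card, hfKdeg] at this
    exact this.symm
  -- scaled polynomial
  have hconst : (C (ι (c ^ m)) : (AlgebraicClosure F)[X]) *
      C ((ι c : AlgebraicClosure F)⁻¹) ^ Multiset.card R = 1 := by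
    rw [hcount, map_pow, ← C_pow, ← C_mul, ← mul_pow, mul_inv_cancel₀ hcK, one_pow, C_1]
  have hSK : (scaleMap c f).map ι =
      ((R.map (fun r => (ι c : AlgebraicClosure F) * r)).map (fun a => X - C a)).prod := by
    rw [scaleMap, Polynomial.map_mul, map_C, Polynomial.map_comp, Polynomial.map_mul, map_C,
      map_X, ← hfK, ← hm]
    conv_lhs => rw [hfKprod]
    rw [multiset_prod_comp, Multiset.map_map]
    have heach : ∀ r ∈ R, ((fun p => p.comp (C (ι c⁻¹) * X)) ∘ fun a => X - C a) r
        = C ((ι c : AlgebraicClosure F)⁻¹) * (X - C (ι c * r)) := by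
      intro r _
      show (X - C r).comp (C (ι c⁻¹) * X) = _
      rw [sub_comp, X_comp, C_comp, map_inv₀]
      conv_rhs => rw [mul_sub, ← C_mul, inv_mul_cancel_left₀ hcK]
    rw [Multiset.map_congr rfl heach]
    have hsplit2 : (R.map (fun r => C ((ι c : AlgebraicClosure F)⁻¹) * (X - C (ι c * r)))).prod
        = C ((ι c : AlgebraicClosure F)⁻¹) ^ Multiset.card R *
          ((R.map (fun r => (ι c : AlgebraicClosure F) * r)).map (fun a => X - C a)).prod := by
      rw [Multiset.prod_map_mul, Multiset.map_const', Multiset.prod_replicate, Multiset.map_map]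
      rfl
    rw [hsplit2, ← mul_assoc, hconst, one_mul]
  have hroots' : ((scaleMap c f).map ι).roots
      = R.map (fun r => (ι c : AlgebraicClosure F) * r) := by
    rw [hSK, roots_multiset_prod_X_sub_C]
  have hder : derivative (scaleMap c f) = C (c ^ m) *
      (C c⁻¹ * (derivative f).comp (C c⁻¹ * X)) := by
    rw [scaleMap]
    simp only [derivative_C_mul, derivative_comp, derivative_X, mul_one]
    rfl
  have hev : ∀ r ∈ R, eval ((ι c : AlgebraicClosure F) * r) (map ι (derivative (scaleMap c f)))
      = (ι c : AlgebraicClosure F) ^ (m - 1) * eval r (map ι (derivative f)) := by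
    intro r _
    rw [hder, Polynomial.map_mul, map_C, Polynomial.map_mul, map_C, Polynomial.map_comp,
      Polynomial.map_mul, map_C, map_X, eval_mul, eval_C, eval_mul, eval_C, eval_comp,
      eval_mul, eval_C, eval_X, map_inv₀, inv_mul_cancel_left₀ hcK, map_pow]
    rw [show ((ι c : AlgebraicClosure F)) ^ m = (ι c : AlgebraicClosure F) ^ (m - 1) * (ι c) by
      rw [← pow_succ]; congr 1; omega]
    rw [mul_assoc, mul_inv_cancel_left₀ hcK]
  have hsdeg : (scaleMap c f).natDegree = m := scaleMap_natDegree hc f hf.ne_zero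
  rw [polyDisc, polyDisc, hsdeg, ← hm, if_neg (show ¬ m ≤ 1 by omega),
    if_neg (show ¬ m ≤ 1 by omega), (scaleMap_monic hc f hf).leadingCoeff, hf.leadingCoeff,
    map_one, one_pow, mul_one, hroots', Multiset.map_map]
  have hev2 : ∀ r ∈ R, ((fun a => eval a (map ι (derivative (scaleMap c f)))) ∘
      fun r => (ι c : AlgebraicClosure F) * r) r
      = (ι c : AlgebraicClosure F) ^ (m - 1) * eval r (map ι (derivative f)) :=
    fun r hr => hev r hr
  rw [Multiset.map_congr rfl hev2, Multiset.prod_map_mul, Multiset.map_const',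
    Multiset.prod_replicate, hcount, ← pow_mul, ← map_pow]
  rw [show (m - 1) * m = m * (m - 1) from Nat.mul_comm _ _]
  ring
end Scale2

section Cover
variable {F : Type*} [Field F] [Fintype F] [DecidableEq F]
local notation "K" => AlgebraicClosure F
local notation "ι" => algebraMap F (AlgebraicClosure F)

lemma pow_cover (q m : ℕ) (hq : Fintype.card F = q)
    (hgcd : Nat.gcd (q - 1) (m * (m - 1)) = 2) (t : F) (ht : t ≠ 0) :
    ∃ c : F, c ≠ 0 ∧ c ^ (m * (m - 1)) = t * t := by
  set u : Fˣ := Units.mk0 t ht with hu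
  have hcard : Fintype.card Fˣ = q - 1 := by rw [Fintype.card_units, hq]
  have hord : u ^ ((q - 1 : ℕ) : ℤ) = 1 := by
    rw [zpow_natCast, ← hcard, pow_card_eq_one]
  set A := Nat.gcdA (q - 1) (m * (m - 1)) with hA
  set B := Nat.gcdB (q - 1) (m * (m - 1)) with hB
  have hbez : (2 : ℤ) = (q - 1 : ℕ) * A + (m * (m - 1) : ℕ) * B := by
    have := Nat.gcd_eq_gcd_ab (q - 1) (m * (m - 1))
    rw [hgcd] at this
    exact_mod_cast this
  set w : Fˣ := u ^ B with hw
  have hkey : w ^ (m * (m - 1)) = u ^ 2 := by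
    have h1 : w ^ ((m * (m - 1) : ℕ) : ℤ) = u ^ (B * (m * (m - 1) : ℕ)) := by
      rw [hw, ← zpow_mul]
    have h2 : B * ((m * (m - 1) : ℕ) : ℤ) = 2 - ((q - 1 : ℕ) : ℤ) * A := by
      linear_combination -hbez
    rw [← zpow_natCast w, h1, h2, zpow_sub, zpow_mul, hord, one_zpow]
    rw [inv_one, mul_one]
    norm_cast
  refine ⟨(w : F), Units.ne_zero w, ?_⟩
  have := congrArg (Units.val) hkey
  rw [Units.val_pow_eq_pow_val, Units.val_pow_eq_pow_val] at this
  rw [this, hu, sq]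
  rfl

lemma char_of_delta (hodd : Odd (Fintype.card F))
    (φ : (AlgebraicClosure F) →+* (AlgebraicClosure F))
    (hφ : ∀ x, φ x = x ^ Fintype.card F)
    (d : F) (hd0 : d ≠ 0) (Δ : AlgebraicClosure F) (hΔ : Δ ≠ 0) (hsq : Δ ^ 2 = ι d) (e : ℕ)
    (hfr : φ Δ = (-1 : AlgebraicClosure F) ^ e * Δ) :
    quadraticChar F d = (-1 : ℤ) ^ e := by
  have h2F : (2 : F) ≠ 0 := by
    intro h2
    have hchar : ringChar F ∣ 2 := (CharP.cast_eq_zero_iff F (ringChar F) 2).mp (by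
      exact_mod_cast h2)
    have hprime : (ringChar F).Prime := CharP.char_is_prime F (ringChar F)
    have : ringChar F = 2 := (Nat.prime_dvd_prime_iff_eq hprime Nat.prime_two).mp hchar
    rw [FiniteField.even_card_iff_char_two] at this
    rcases hodd with ⟨j, hj⟩
    omega
  have h2K : (2 : AlgebraicClosure F) ≠ 0 := by
    intro h2
    apply h2F
    apply (algebraMap F (AlgebraicClosure F)).injective
    rw [map_ofNat, map_zero]
    exact h2
  rcases Nat.even_or_odd e with he | he
  · rw [he.neg_one_pow, one_mul] at hfr
    rw [he.neg_one_pow]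
    obtain ⟨t, ht⟩ := (mem_range_iff_pow_card Δ).mp (by rw [← hφ]; exact hfr)
    have hd : d = t * t := by
      apply (algebraMap F (AlgebraicClosure F)).injective
      rw [← hsq, ← ht, map_mul, sq]
    exact (quadraticChar_one_iff_isSquare hd0).mpr ⟨t, hd⟩
  · rw [he.neg_one_pow, neg_one_mul] at hfr
    rw [he.neg_one_pow]
    rw [quadraticChar_neg_one_iff_not_isSquare]
    rintro ⟨t, ht⟩
    have ht0 : (ι t : AlgebraicClosure F) ≠ 0 := by
      intro h
      rw [ht, ((algebraMap F (AlgebraicClosure F)).injective (by rw [h, map_zero]) : t = 0),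
        mul_zero] at hd0
      exact hd0 rfl
    have hsq2 : (Δ - ι t) * (Δ + ι t) = 0 := by
      have : Δ ^ 2 = (ι t) ^ 2 := by rw [hsq, ht, map_mul, sq]
      ring_nf
      rw [← sub_eq_zero] at this ⊢
      linear_combination this
    have hfix : φ Δ = Δ := by
      rcases mul_eq_zero.mp hsq2 with h | h
      · have hΔt : Δ = ι t := sub_eq_zero.mp h
        rw [hΔt, hφ, ← map_pow, FiniteField.pow_card]
      · have hΔt : Δ = - ι t := eq_neg_of_add_eq_zero_left h
        rw [hΔt, map_neg]
        congr 1
        rw [hφ, ← map_pow, FiniteField.pow_card]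
    rw [hfr] at hfix
    have : (2 : AlgebraicClosure F) * Δ = 0 := by linear_combination - hfix
    rcases mul_eq_zero.mp this with h | h
    · exact h2K h
    · exact hΔ h
end Cover

section Main
variable {F : Type*} [Field F] [Fintype F]
local notation "ι" => algebraMap F (AlgebraicClosure F)

lemma hft_facts {m : ℕ} (lam : m.Partition) (f : F[X]) (h : hasFactorizationType f lam) :
    f.Monic ∧ f.natDegree = m := by
  obtain ⟨s, hs, hprod, hdeg⟩ := h
  constructor
  · rw [← hprod]; exact monic_prod_of_monic _ _ fun π hπ => (hs π hπ).1
  · rw [← hprod, natDegree_prod _ _ (fun π hπ => (hs π hπ).2.ne_zero),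
      Finset.sum_eq_multiset_sum, hdeg, lam.parts_sum]

lemma disc_char_main [DecidableEq F] (hodd : Odd (Fintype.card F)) {m : ℕ} (hm : 2 ≤ m)
    (lam : m.Partition) (f : F[X]) (h : hasFactorizationType f lam) :
    ∃ d : F, d ≠ 0 ∧ (ι d : AlgebraicClosure F) = polyDisc f ∧
      quadraticChar F d = (-1 : ℤ) ^ (m - lam.parts.card) := by
  obtain ⟨φ, hφ⟩ := exists_frobK (F := F)
  obtain ⟨s, hs, hprod, hdeg⟩ := h
  have hmono := hft_facts lam f ⟨s, hs, hprod, hdeg⟩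
  have hcardk : s.card = lam.parts.card := by rw [← hdeg, Multiset.card_map]; rfl
  have hm2 : 2 ≤ (∏ π ∈ s, π).natDegree := by rw [hprod, hmono.2]; exact hm
  obtain ⟨d, Δ, hd0, hdisc, hΔ0, hΔsq, hΔfr⟩ := discA φ hφ s hs hm2
  refine ⟨d, hd0, by rw [hdisc, hprod], ?_⟩
  rw [char_of_delta hodd φ hφ d hd0 Δ hΔ0 hΔsq _ hΔfr]
  congr 1
  rw [hprod, hmono.2, hcardk]

lemma sq_ratio [DecidableEq F] {j : ℕ} (a b : F) (ha : a ≠ 0) (hb : b ≠ 0)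
    (haχ : quadraticChar F a = (-1 : ℤ) ^ j) (hbχ : quadraticChar F b = (-1 : ℤ) ^ j) :
    IsSquare (a / b) := by
  have hne' : a / b ≠ 0 := div_ne_zero ha hb
  rw [← quadraticChar_one_iff_isSquare hne']
  have hmul : quadraticChar F (a / b) * quadraticChar F b = quadraticChar F a := by
    rw [← map_mul]; congr 1; field_simp
  rw [haχ, hbχ] at hmul
  have h4 : ((-1 : ℤ) ^ j) * ((-1 : ℤ) ^ j) = 1 := by
    rw [← pow_add, ← two_mul, pow_mul]; norm_num
  calc quadraticChar F (a / b) = quadraticChar F (a / b) * (((-1:ℤ)^j) * ((-1:ℤ)^j)) := by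
        rw [h4, mul_one]
    _ = (quadraticChar F (a / b) * ((-1:ℤ)^j)) * ((-1:ℤ)^j) := by ring
    _ = ((-1:ℤ)^j) * ((-1:ℤ)^j) := by rw [hmul]
    _ = 1 := h4

lemma scale_exists [DecidableEq F] (m : ℕ)
    (hgcd : Nat.gcd (Fintype.card F - 1) (m * (m - 1)) = 2) {j : ℕ} (a b : F)
    (ha : a ≠ 0) (hb : b ≠ 0)
    (haχ : quadraticChar F a = (-1 : ℤ) ^ j) (hbχ : quadraticChar F b = (-1 : ℤ) ^ j) :
    ∃ c : F, c ≠ 0 ∧ c ^ (m * (m - 1)) = a / b := by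
  obtain ⟨t, hts⟩ := sq_ratio a b ha hb haχ hbχ
  have ht0 : t ≠ 0 := by
    rintro rfl
    rw [mul_zero] at hts
    exact (div_ne_zero ha hb) hts
  obtain ⟨c, hc0, hcp⟩ := pow_cover (Fintype.card F) m rfl hgcd t ht0
  exact ⟨c, hc0, by rw [hcp, ← hts]⟩

lemma scale_member [DecidableEq F] {m : ℕ} (hm : 2 ≤ m) (lam : m.Partition)
    (c : F) (hc : c ≠ 0) (δ δ' : F) (hrel : c ^ (m * (m - 1)) * δ = δ')
    (f : F[X]) (hf : hasFactorizationType f lam ∧ polyDisc f = ι δ) :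
    hasFactorizationType (scaleMap c f) lam ∧ polyDisc (scaleMap c f) = ι δ' := by
  have hfacts := hft_facts lam f hf.1
  refine ⟨scaleMap_hasFactorizationType hc lam f hf.1, ?_⟩
  rw [scaleMap_polyDisc hc f hfacts.1 (by rw [hfacts.2]; exact hm), hf.2, ← map_mul,
    hfacts.2, hrel]

end Main

/-- If `q` is odd, `gcd(q-1, m(m-1)) = 2`, and `λ` is a partition of `m ≥ 2` with `k` parts
such that `S_{λ,F_q}` is nonempty, then `D_{λ,F_q} = {d ∈ F_q^× : χ_q(d) = (-1)^(m-k)}` and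
any two elements of this set are discriminants of equally many polynomials in `S_{λ,F_q}`. -/
theorem stmt13 {F : Type*} [Field F] [Fintype F] [DecidableEq F] (q m : ℕ)
    (hq : Fintype.card F = q) (hodd : Odd q) (hm : 2 ≤ m)
    (hgcd : Nat.gcd (q - 1) (m * (m - 1)) = 2) (lam : m.Partition)
    (hne : ∃ f : F[X], hasFactorizationType f lam) :
    {d : F | ∃ f : F[X], hasFactorizationType f lam ∧
        polyDisc f = algebraMap F (AlgebraicClosure F) d} =
      {d : F | d ≠ 0 ∧ quadraticChar F d = (-1 : ℤ) ^ (m - lam.parts.card)} ∧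
    ∀ δ₁ δ₂ : F, δ₁ ≠ 0 → quadraticChar F δ₁ = (-1 : ℤ) ^ (m - lam.parts.card) →
      δ₂ ≠ 0 → quadraticChar F δ₂ = (-1 : ℤ) ^ (m - lam.parts.card) →
      {f : F[X] | hasFactorizationType f lam ∧
          polyDisc f = algebraMap F (AlgebraicClosure F) δ₁}.ncard =
      {f : F[X] | hasFactorizationType f lam ∧
          polyDisc f = algebraMap F (AlgebraicClosure F) δ₂}.ncard := by
  subst hq
  constructor
  · ext d
    simp only [Set.mem_setOf_eq]
    constructor
    · rintro ⟨f, hft, hdisc⟩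
      obtain ⟨d', hd'0, hd'ι, hd'χ⟩ := disc_char_main hodd hm lam f hft
      have hdd : d' = d := (algebraMap F _).injective (by rw [hd'ι, hdisc])
      exact hdd ▸ ⟨hd'0, hd'χ⟩
    · rintro ⟨hd0, hdχ⟩
      obtain ⟨f₀, hft₀⟩ := hne
      obtain ⟨d₀, hd₀0, hd₀ι, hd₀χ⟩ := disc_char_main hodd hm lam f₀ hft₀
      obtain ⟨c, hc0, hcp⟩ := scale_exists m hgcd d d₀ hd0 hd₀0 hdχ hd₀χ
      have hrel : c ^ (m * (m - 1)) * d₀ = d := by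
        rw [hcp, div_mul_cancel₀ _ hd₀0]
      obtain ⟨h1, h2⟩ := scale_member hm lam c hc0 d₀ d hrel f₀ ⟨hft₀, hd₀ι.symm⟩
      exact ⟨scaleMap c f₀, h1, h2⟩
  · intro δ₁ δ₂ h10 h1χ h20 h2χ
    obtain ⟨c, hc0, hcp⟩ := scale_exists m hgcd δ₂ δ₁ h20 h10 h2χ h1χ
    have hrel1 : c ^ (m * (m - 1)) * δ₁ = δ₂ := by
      rw [hcp, div_mul_cancel₀ _ h10]
    have hrel2 : (c⁻¹) ^ (m * (m - 1)) * δ₂ = δ₁ := by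
      rw [inv_pow, hcp]
      field_simp
    have himg : (scaleMap c) '' {f : F[X] | hasFactorizationType f lam ∧
          polyDisc f = algebraMap F (AlgebraicClosure F) δ₁} =
        {f : F[X] | hasFactorizationType f lam ∧
          polyDisc f = algebraMap F (AlgebraicClosure F) δ₂} := by
      apply Set.eq_of_subset_of_subset
      · rintro g ⟨f, hf, rfl⟩
        exact scale_member hm lam c hc0 δ₁ δ₂ hrel1 f hf
      · intro g hg
        refine ⟨scaleMap c⁻¹ g, scale_member hm lam c⁻¹ (inv_ne_zero hc0) δ₂ δ₁ hrel2 g hg, ?_⟩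
        have := scaleMap_scaleMap (inv_ne_zero hc0) g (hft_facts lam g hg.1).1.ne_zero
        rwa [inv_inv] at this
    rw [← himg, Set.ncard_image_of_injective _ (scaleMap_injective hc0)]
end

section
/- Let q be a prime power and let ℓ be an odd prime dividing q - 1. Then for every nonnegative integer t, v_ℓ(N_q(2^t · ℓ)) = v_ℓ(q - 1) - 1, where N_q(n) denotes the number of monic irreducible polynomials of degree n in F_q[x]. -/
/-!
Gauss's formula `∑_{d ∣ n} d · N_q(d) = q ^ n`, read off from the factorisation of `X ^ q ^ n - X`
into all monic irreducibles of degree dividing `n`, inverts by Möbius to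
`n · N_q(n) = ∑_{d ∣ n} μ(d) q ^ (n / d)`. For `n = ℓ` this is `q ^ ℓ - q`; for `n = 2 ^ (s + 1) ℓ`
and `A = q ^ 2 ^ s` it factors as `(A ^ ℓ - A) (A ^ ℓ + A - 1)`. Since `ℓ ∣ A - 1`, the second
factor is `≡ 1 mod ℓ`, while lifting the exponent gives
`v_ℓ(A ^ ℓ - A) = v_ℓ(A ^ (ℓ - 1) - 1) = v_ℓ(A - 1) = v_ℓ(q - 1)`, because `ℓ` divides neither
`ℓ - 1` nor `2 ^ s`. So `v_ℓ(n · N_q(n)) = v_ℓ(q - 1)`, and `v_ℓ(n) = 1`.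
-/

open Polynomial
open scoped Classical

open Finset UniqueFactorizationMonoid
open scoped ArithmeticFunction.Moebius

noncomputable def monicIrreducibleCount (F : Type*) [Field F] (n : ℕ) : ℕ :=
  {f : F[X] | f.Monic ∧ Irreducible f ∧ f.natDegree = n}.ncard

theorem Polynomial.natDegree_eq_sum_natDegree_normalizedFactors {K : Type*} [Field K] {f : K[X]}
    (hf : f ≠ 0) : f.natDegree = ((normalizedFactors f).map natDegree).sum := by
  rw [← natDegree_multiset_prod_of_monic _
    fun P hP => ((Polynomial.mem_normalizedFactors_iff hf).mp hP).2.1]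
  exact natDegree_eq_of_degree_eq (degree_eq_degree_of_associated (prod_normalizedFactors hf)).symm

open ArithmeticFunction in
theorem ArithmeticFunction.sum_divisors_moebius_mul_eq_sum_powerset {R : Type*} [CommRing R]
    {n : ℕ} (hn : n ≠ 0) (g : ℕ → R) :
    ∑ d ∈ n.divisors, (μ d : R) * g d =
      ∑ S ∈ n.primeFactors.powerset, (-1) ^ #S * g (∏ p ∈ S, p) := by
  rw [← sum_filter_of_ne (p := Squarefree) fun d _ h => by
      contrapose! h; simp [moebius_eq_zero_of_not_squarefree h],
    Nat.sum_divisors_filter_squarefree hn, Nat.factors_eq, List.toFinset_coe, Nat.toFinset_factors]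
  refine sum_congr rfl fun S hS => ?_
  have hSn := mem_powerset.mp hS
  rw [prod_val]
  change (μ (∏ p ∈ S, p) : R) * g (∏ p ∈ S, p) = _
  rw [isMultiplicative_moebius.map_prod_of_subset_primeFactors n S hSn,
    prod_congr rfl fun p hp => moebius_apply_prime (Nat.prime_of_mem_primeFactors (hSn hp))]
  simp

namespace FiniteField

variable {F : Type*} [Field F] [Finite F] {n : ℕ}

theorem separable_X_pow_card_pow_sub_X (hn : n ≠ 0) :
    (X ^ Nat.card F ^ n - X : F[X]).Separable := by
  have := Fintype.ofFinite F
  refine galois_poly_separable (ringChar F) _ (dvd_pow ?_ hn)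
  rw [← CharP.cast_eq_zero_iff F, Nat.card_eq_fintype_card]
  exact Nat.cast_card_eq_zero F

theorem mem_normalizedFactors_X_pow_card_pow_sub_X (hn : n ≠ 0) {P : F[X]} :
    P ∈ normalizedFactors (X ^ Nat.card F ^ n - X : F[X]) ↔
      P.Monic ∧ Irreducible P ∧ P.natDegree ∣ n := by
  rw [Polynomial.mem_normalizedFactors_iff (X_pow_card_pow_sub_X_ne_zero F hn Finite.one_lt_card)]
  constructor
  · rintro ⟨hirr, hmonic, hdvd⟩
    exact ⟨hmonic, hirr, hirr.natDegree_dvd_of_dvd_X_pow_card_pow_sub_X hdvd⟩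
  · rintro ⟨hmonic, hirr, hdvd⟩
    exact ⟨hirr, hmonic, hirr.natDegree_dvd_iff_dvd_X_pow_card_pow_sub_X.mp hdvd⟩

theorem sum_divisors_mul_monicIrreducibleCount (hn : n ≠ 0) :
    ∑ d ∈ n.divisors, d * monicIrreducibleCount F d = Nat.card F ^ n := by
  have hX : (X ^ Nat.card F ^ n - X : F[X]) ≠ 0 :=
    X_pow_card_pow_sub_X_ne_zero F hn Finite.one_lt_card
  set T := (normalizedFactors (X ^ Nat.card F ^ n - X : F[X])).toFinset
  have hT : normalizedFactors (X ^ Nat.card F ^ n - X : F[X]) = T.val := by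
    rw [Multiset.toFinset_val, Multiset.dedup_eq_self.mpr]
    exact (squarefree_iff_nodup_normalizedFactors hX).mp
      (separable_X_pow_card_pow_sub_X hn).squarefree
  have hcount : ∀ d ∈ n.divisors, monicIrreducibleCount F d = #{P ∈ T | P.natDegree = d} := by
    intro d hd
    rw [monicIrreducibleCount, ← Set.ncard_coe_finset]
    congr 1
    ext P
    simp only [T, Set.mem_ofPred_eq, coe_filter, Multiset.mem_toFinset,
      mem_normalizedFactors_X_pow_card_pow_sub_X hn]
    constructor
    · rintro ⟨hmonic, hirr, rfl⟩
      exact ⟨⟨hmonic, hirr, Nat.dvd_of_mem_divisors hd⟩, rfl⟩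
    · rintro ⟨⟨hmonic, hirr, -⟩, hdeg⟩
      exact ⟨hmonic, hirr, hdeg⟩
  calc ∑ d ∈ n.divisors, d * monicIrreducibleCount F d
      = ∑ d ∈ n.divisors, ∑ P ∈ T with P.natDegree = d, P.natDegree := by
        refine sum_congr rfl fun d hd => ?_
        rw [hcount d hd, sum_congr rfl fun P hP => (mem_filter.mp hP).2, sum_const, smul_eq_mul,
          mul_comm]
    _ = ∑ P ∈ T, P.natDegree := by
        refine sum_fiberwise_of_maps_to (fun P hP => Nat.mem_divisors.mpr ⟨?_, hn⟩) _
        exact ((mem_normalizedFactors_X_pow_card_pow_sub_X hn).mp (Multiset.mem_toFinset.mp hP)).2.2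
    _ = (X ^ Nat.card F ^ n - X : F[X]).natDegree := by
        rw [natDegree_eq_sum_natDegree_normalizedFactors hX, hT]
        rfl
    _ = Nat.card F ^ n := X_pow_card_pow_sub_X_natDegree_eq F hn Finite.one_lt_card

open ArithmeticFunction in
theorem mul_monicIrreducibleCount_eq_sum_moebius (hn : 0 < n) :
    (n * monicIrreducibleCount F n : ℤ) = ∑ d ∈ n.divisors, μ d * (Nat.card F : ℤ) ^ (n / d) := by
  rw [← Nat.sum_divisorsAntidiagonal fun d e => (μ d : ℤ) * (Nat.card F : ℤ) ^ e]
  have := (sum_eq_iff_sum_mul_moebius_eq (R := ℤ)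
    (f := fun m => (m * monicIrreducibleCount F m : ℤ)) (g := fun m => (Nat.card F : ℤ) ^ m)).mp
    (fun m hm => by exact_mod_cast sum_divisors_mul_monicIrreducibleCount hm.ne') n hn
  simpa using this.symm

theorem mul_monicIrreducibleCount_eq_sum_powerset (hn : n ≠ 0) :
    (n * monicIrreducibleCount F n : ℤ) =
      ∑ S ∈ n.primeFactors.powerset, (-1) ^ #S * (Nat.card F : ℤ) ^ (n / ∏ p ∈ S, p) := by
  rw [mul_monicIrreducibleCount_eq_sum_moebius (Nat.pos_of_ne_zero hn)]
  simpa only [Int.cast_id] using ArithmeticFunction.sum_divisors_moebius_mul_eq_sum_powerset hn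
    fun d => (Nat.card F : ℤ) ^ (n / d)

theorem prime_mul_monicIrreducibleCount {l : ℕ} (hl : l.Prime) :
    l * monicIrreducibleCount F l = Nat.card F ^ l - Nat.card F := by
  have h := mul_monicIrreducibleCount_eq_sum_powerset (F := F) hl.ne_zero
  rw [hl.primeFactors, show ({l} : Finset ℕ) = insert l ∅ from rfl,
    sum_powerset_insert (notMem_empty l), powerset_empty] at h
  simp only [sum_singleton, card_empty, pow_zero, prod_empty, Nat.div_one, one_mul, insert_empty_eq,
    card_singleton, pow_one, prod_singleton, Nat.div_self hl.pos, neg_mul] at h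
  zify [Nat.le_self_pow hl.ne_zero (Nat.card F)]
  linear_combination h

theorem two_pow_succ_mul_prime_mul_monicIrreducibleCount {l : ℕ} (hl : l.Prime) (hl2 : l ≠ 2)
    (s : ℕ) :
    2 ^ (s + 1) * l * monicIrreducibleCount F (2 ^ (s + 1) * l) =
      ((Nat.card F ^ 2 ^ s) ^ l - Nat.card F ^ 2 ^ s) *
        ((Nat.card F ^ 2 ^ s) ^ l + (Nat.card F ^ 2 ^ s - 1)) := by
  have h := mul_monicIrreducibleCount_eq_sum_powerset (F := F)
    (mul_ne_zero (pow_ne_zero (s + 1) two_ne_zero) hl.ne_zero)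
  rw [Nat.primeFactors_mul (by positivity) hl.ne_zero,
    Nat.primeFactors_prime_pow (by omega) Nat.prime_two, hl.primeFactors,
    show ({2} : Finset ℕ) ∪ {l} = insert 2 (insert l ∅) from rfl] at h
  simp only [sum_powerset_insert (show 2 ∉ insert l ∅ by simpa using hl2.symm),
    sum_powerset_insert (notMem_empty l), powerset_empty, sum_singleton] at h
  simp only [Nat.cast_mul, Nat.cast_pow, Nat.cast_ofNat, card_empty, pow_zero, prod_empty,
    Nat.div_one, one_mul, insert_empty_eq, card_singleton, pow_one, prod_singleton, neg_mul,
    mem_singleton, hl2.symm, not_false_eq_true, card_insert_of_notMem, prod_insert] at h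
  have hdiv_l : 2 ^ (s + 1) * l / l = 2 ^ s * 2 := by rw [Nat.mul_div_cancel _ hl.pos, pow_succ]
  have hdiv_two : 2 ^ (s + 1) * l / 2 = 2 ^ s * l := by
    rw [pow_succ, mul_right_comm, Nat.mul_div_cancel _ two_pos]
  have hdiv_two_l : 2 ^ (s + 1) * l / (2 * l) = 2 ^ s := by
    rw [pow_succ, mul_assoc, Nat.mul_div_cancel _ (Nat.mul_pos two_pos hl.pos)]
  rw [hdiv_l, hdiv_two, hdiv_two_l] at h
  have hA : 1 ≤ Nat.card F ^ 2 ^ s := Nat.one_le_pow _ _ Nat.card_pos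
  zify [hA, Nat.le_self_pow hl.ne_zero (Nat.card F ^ 2 ^ s)]
  linear_combination h

end FiniteField

theorem Odd.not_dvd_two_pow {l : ℕ} (hodd : Odd l) (hl : l ≠ 1) (s : ℕ) : ¬ l ∣ 2 ^ s :=
  fun h => hl ((hodd.coprime_two_right.pow_right s).eq_one_of_dvd h)

theorem Nat.not_dvd_of_dvd_sub_one {l q : ℕ} (hl : l ≠ 1) (hq : q ≠ 0) (h : l ∣ q - 1) :
    ¬ l ∣ q := by
  intro hlq
  have := Nat.dvd_sub hlq h
  rw [Nat.sub_sub_self (Nat.one_le_iff_ne_zero.mpr hq)] at this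
  exact hl (Nat.dvd_one.mp this)

section Valuation

variable {l : ℕ} [Fact l.Prime]

theorem padicValNat_pow_sub_one_of_not_dvd (hlodd : Odd l) {q k : ℕ} (hq : 1 < q)
    (hdvd : l ∣ q - 1) (hk : ¬ l ∣ k) :
    padicValNat l (q ^ k - 1) = padicValNat l (q - 1) := by
  have hk0 : k ≠ 0 := by rintro rfl; exact hk (dvd_zero l)
  have h := padicValNat.pow_sub_pow hlodd (y := 1) hq (by simpa using hdvd)
    (Nat.not_dvd_of_dvd_sub_one (Fact.out : l.Prime).ne_one (by omega) hdvd) hk0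
  simpa [padicValNat.eq_zero_of_not_dvd hk] using h

theorem padicValNat_pow_self_sub (hlodd : Odd l) {A : ℕ} (hA : 1 < A) (hdvd : l ∣ A - 1) :
    padicValNat l (A ^ l - A) = padicValNat l (A - 1) := by
  have hl : l.Prime := Fact.out
  have hl2 := hl.two_le
  have hfactor : A ^ l - A = A * (A ^ (l - 1) - 1) := by
    rw [Nat.mul_sub, mul_one, ← pow_succ', Nat.sub_add_cancel hl.one_le]
  have hpow : 1 < A ^ (l - 1) := Nat.one_lt_pow (by omega) hA
  rw [hfactor, padicValNat.mul (a := A) (by omega) (by omega),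
    padicValNat.eq_zero_of_not_dvd (Nat.not_dvd_of_dvd_sub_one hl.ne_one (by omega) hdvd),
    padicValNat_pow_sub_one_of_not_dvd hlodd hA hdvd
      (Nat.not_dvd_of_pos_of_lt (by omega) (by omega)), zero_add]

theorem padicValNat_two_pow_mul_monicIrreducibleCount {F : Type*} [Field F] [Finite F]
    (hlodd : Odd l) (hdvd : l ∣ Nat.card F - 1) (t : ℕ) :
    padicValNat l (2 ^ t * l * monicIrreducibleCount F (2 ^ t * l)) =
      padicValNat l (Nat.card F - 1) := by
  have hl : l.Prime := Fact.out
  have hq : 1 < Nat.card F := Finite.one_lt_card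
  cases t with
  | zero =>
    rw [pow_zero, one_mul, FiniteField.prime_mul_monicIrreducibleCount hl,
      padicValNat_pow_self_sub hlodd hq hdvd]
  | succ s =>
    have hl2 : l ≠ 2 := by rintro rfl; exact Nat.not_even_iff_odd.mpr hlodd even_two
    have hA : 1 < Nat.card F ^ 2 ^ s := Nat.one_lt_pow (by positivity) hq
    have hdvdA : l ∣ Nat.card F ^ 2 ^ s - 1 := by
      simpa using hdvd.trans (Nat.sub_dvd_pow_sub_pow (Nat.card F) 1 (2 ^ s))
    have hcofactor : ¬ l ∣ (Nat.card F ^ 2 ^ s) ^ l + (Nat.card F ^ 2 ^ s - 1) := by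
      rw [Nat.dvd_add_left hdvdA]
      exact fun h => Nat.not_dvd_of_dvd_sub_one hl.ne_one (by omega) hdvdA (hl.dvd_of_dvd_pow h)
    have hlt : Nat.card F ^ 2 ^ s < (Nat.card F ^ 2 ^ s) ^ l := lt_self_pow₀ hA hl.one_lt
    rw [FiniteField.two_pow_succ_mul_prime_mul_monicIrreducibleCount hl hl2,
      padicValNat.mul (by omega) (by omega), padicValNat.eq_zero_of_not_dvd hcofactor, add_zero,
      padicValNat_pow_self_sub hlodd hA hdvdA,
      padicValNat_pow_sub_one_of_not_dvd hlodd hq hdvd (hlodd.not_dvd_two_pow hl.ne_one s)]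

end Valuation

/-- If `ℓ` is an odd prime dividing `q - 1`, then for every `t ≥ 0` the number `N_q(2^t·ℓ)`
of monic irreducible polynomials of degree `2^t·ℓ` in `F_q[x]` satisfies
`v_ℓ(N_q(2^t·ℓ)) = v_ℓ(q-1) - 1`. -/
theorem stmt17 {F : Type*} [Field F] [Fintype F] (q l : ℕ) (hq : Fintype.card F = q)
    (hl : l.Prime) (hlodd : Odd l) (hdvd : l ∣ q - 1) (t : ℕ) :
    padicValNat l
        ({f : F[X] | f.Monic ∧ Irreducible f ∧ f.natDegree = 2 ^ t * l}.ncard) =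
      padicValNat l (q - 1) - 1 := by
  have : Fact l.Prime := ⟨hl⟩
  rw [← hq, Fintype.card_eq_nat_card] at hdvd ⊢
  change padicValNat l (monicIrreducibleCount F (2 ^ t * l)) = _
  have hv := padicValNat_two_pow_mul_monicIrreducibleCount hlodd hdvd t
  have hq1 : 1 < Nat.card F := Finite.one_lt_card
  have hv1 : 1 ≤ padicValNat l (Nat.card F - 1) := one_le_padicValNat_of_dvd (by omega) hdvd
  -- `padicValNat l 0 = 0`, while `hv` has a positive right side
  have hN : monicIrreducibleCount F (2 ^ t * l) ≠ 0 := by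
    intro h
    rw [h, mul_zero, padicValNat_zero_right] at hv
    omega
  rw [padicValNat.mul (mul_ne_zero (by positivity) hl.ne_zero) hN,
    padicValNat.mul (by positivity) hl.ne_zero,
    padicValNat.eq_zero_of_not_dvd (hlodd.not_dvd_two_pow hl.ne_one t), padicValNat_self] at hv
  omega
end

section
/- Let q be a power of 2 such that q - 1 is squarefree, and let m ≥ 2 be an integer. If for every partition λ of m the discriminants of the polynomials in S_{λ,F_q} are equally distributed among the elements of F_q^×, then gcd(q-1, m(m-1)) = 1. -/
/-!
Suppose a prime `p` divides both `q - 1` and `m (m - 1)`; since `q` is even and `q - 1` is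
squarefree, `p` is odd and `p² ∤ q - 1`. Writing `m` (resp. `m - 1`) as `p` times a sum of
distinct powers of two gives a partition `λ` of `m` into distinct parts, each equal to `1` or to
some `p·2ʲ`, and `|S_λ|` is the product over the parts `d` of the number `N(d)` of monic
irreducibles of degree `d`. Equidistribution forces `q - 1 ∣ |S_λ|`, hence `p ∣ N(d)` for some
part `d`. But `N(1) = q`, and Gauss's formula `qⁿ = ∑_{d ∣ n} d N(d)` with Möbius inversion and
`qᵇ ≡ 1 + b (q - 1) mod (q - 1)²` gives `d N(d) ≡ (q - 1) φ(d) mod (q - 1)²` for `d > 1`;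
as `p ∥ q - 1`, `p ∣ d` and `p ∤ φ(p·2ʲ)`, this rules out `p ∣ N(p·2ʲ)`.
-/

open Polynomial
open scoped Classical

open UniqueFactorizationMonoid ArithmeticFunction

def monicIrreducibles (F : Type*) [Field F] (d : ℕ) : Set F[X] :=
  {π | π.Monic ∧ Irreducible π ∧ π.natDegree = d}

section Counting

variable {F : Type*} [Field F]

theorem prod_monicIrreducibles_injective (D : Finset ℕ) :
    Function.Injective fun g : ∀ d : D, monicIrreducibles F d => ∏ d ∈ D.attach, (g d : F[X]) := by
  intro g g' h
  funext d₀
  have hdvd : (g d₀ : F[X]) ∣ ∏ d ∈ D.attach, (g' d : F[X]) := by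
    simpa only [← h] using Finset.dvd_prod_of_mem _ (Finset.mem_attach _ d₀)
  obtain ⟨d₁, -, hd₁⟩ := ((g d₀).2.2.1.prime).exists_mem_finset_dvd hdvd
  have heq : (g d₀ : F[X]) = g' d₁ := eq_of_monic_of_associated (g d₀).2.1 (g' d₁).2.1
    ((g d₀).2.2.1.associated_of_dvd (g' d₁).2.2.1 hd₁)
  have hd : d₀ = d₁ := Subtype.ext <| by rw [← (g d₀).2.2.2, ← (g' d₁).2.2.2, heq]
  exact Subtype.ext (hd ▸ heq)

theorem range_prod_monicIrreducibles {m : ℕ} (lam : m.Partition) {D : Finset ℕ}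
    (hD : lam.parts = D.val) :
    Set.range (fun g : ∀ d : D, monicIrreducibles F d => ∏ d ∈ D.attach, (g d : F[X])) =
      {f | hasFactorizationType f lam} := by
  ext f
  constructor
  · rintro ⟨g, rfl⟩
    have hinj : Function.Injective fun d : D => (g d : F[X]) := fun d d' h =>
      Subtype.ext <| by rw [← (g d).2.2.2, ← (g d').2.2.2]; exact congrArg natDegree h
    refine ⟨D.attach.map ⟨_, hinj⟩, ?_, Finset.prod_map _ _ _, ?_⟩
    · simp only [Finset.mem_map, Finset.mem_attach, true_and, Function.Embedding.coeFn_mk]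
      rintro _ ⟨d, rfl⟩
      exact ⟨(g d).2.1, (g d).2.2.1⟩
    · rw [hD, Finset.map_val, Finset.attach_val, Multiset.map_map]
      exact (Multiset.map_congr rfl fun d _ => (g d).2.2.2).trans (Multiset.attach_map_val _)
  · rintro ⟨s, hs, rfl, hdeg⟩
    rw [hD] at hdeg
    have hinj : ∀ π ∈ s.val, ∀ ρ ∈ s.val, π.natDegree = ρ.natDegree → π = ρ :=
      Multiset.inj_on_of_nodup_map (hdeg ▸ D.nodup)
    have hex (d : D) : ∃ π ∈ s, π.natDegree = d := Multiset.mem_map.mp (hdeg ▸ d.2)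
    choose g hgs hgdeg using hex
    refine ⟨fun d => ⟨g d, (hs _ (hgs d)).1, (hs _ (hgs d)).2, hgdeg d⟩, ?_⟩
    refine Finset.prod_bij (fun d _ => g d) (fun d _ => hgs d)
      (fun d _ d' _ h => Subtype.ext <| by rw [← hgdeg d, ← hgdeg d', h]) (fun π hπ => ?_)
      (fun _ _ => rfl)
    have hπD : π.natDegree ∈ D.val := hdeg ▸ Multiset.mem_map_of_mem _ hπ
    exact ⟨⟨_, hπD⟩, Finset.mem_attach _ _, hinj _ (hgs _) _ hπ (hgdeg _)⟩

theorem ncard_setOf_hasFactorizationType {m : ℕ} (lam : m.Partition) {D : Finset ℕ}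
    (hD : lam.parts = D.val) :
    {f : F[X] | hasFactorizationType f lam}.ncard = ∏ d ∈ D, (monicIrreducibles F d).ncard := by
  rw [← range_prod_monicIrreducibles lam hD, ← Nat.card_coe_set_eq,
    Nat.card_range_of_injective (prod_monicIrreducibles_injective D), Nat.card_pi,
    ← Finset.prod_coe_sort D]
  simp only [Nat.card_coe_set_eq]

end Counting

theorem dvd_of_forall_dvd_sum_divisors {R : Type*} [CommRing R] {c : R} {f : ℕ → R}
    (h : ∀ n > 0, c ∣ ∑ i ∈ n.divisors, f i) {n : ℕ} (hn : 0 < n) : c ∣ f n := by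
  rw [← (sum_eq_iff_sum_mul_moebius_eq (f := f)).mp (fun _ _ => rfl) n hn]
  exact Finset.dvd_sum fun x hx => dvd_mul_of_dvd_right
    (h _ (Nat.pos_of_mem_divisors (Nat.snd_mem_divisors_of_mem_antidiagonal hx))) _

section FiniteField

variable {F : Type*} [Field F] [Fintype F]

theorem card_pow_eq_sum_divisors {n : ℕ} (hn : n ≠ 0) :
    Fintype.card F ^ n = ∑ d ∈ n.divisors, d * (monicIrreducibles F d).ncard := by
  set q := Fintype.card F
  have hq : 1 < q := Fintype.one_lt_card
  set g : F[X] := X ^ q ^ n - X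
  have hg : g ≠ 0 := FiniteField.X_pow_card_pow_sub_X_ne_zero F hn hq
  have hsep : g.Separable := galois_poly_separable (ringChar F) (q ^ n)
    (dvd_pow ((ringChar.spec F q).mp (FiniteField.cast_card_eq_zero F)) hn)
  set T := (normalizedFactors g).toFinset
  have hT : T.val = normalizedFactors g := Multiset.dedup_eq_self.mpr <|
    (squarefree_iff_nodup_normalizedFactors hg).mp hsep.squarefree
  have hdvd_iff {π : F[X]} (hπ : Irreducible π) : π.natDegree ∣ n ↔ π ∣ g := by
    simpa only [Nat.card_eq_fintype_card] using hπ.natDegree_dvd_iff_dvd_X_pow_card_pow_sub_X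
  have hmem (π : F[X]) : π ∈ T ↔ π.Monic ∧ Irreducible π ∧ π.natDegree ∣ n := by
    rw [Multiset.mem_toFinset, Polynomial.mem_normalizedFactors_iff hg]
    exact ⟨fun ⟨hirr, hmon, hdvd⟩ => ⟨hmon, hirr, (hdvd_iff hirr).mpr hdvd⟩,
      fun ⟨hmon, hirr, hdvd⟩ => ⟨hirr, hmon, (hdvd_iff hirr).mp hdvd⟩⟩
  have hdeg : q ^ n = ∑ π ∈ T, π.natDegree := by
    rw [← FiniteField.X_pow_card_pow_sub_X_natDegree_eq F hn hq,
      ← natDegree_eq_of_degree_eq (degree_eq_degree_of_associated (prod_normalizedFactors hg)),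
      natDegree_multiset_prod _ (zero_notMem_normalizedFactors g), Finset.sum, hT]
  rw [hdeg, ← Finset.sum_fiberwise_of_maps_to (g := natDegree) (t := n.divisors)
    fun π hπ => Nat.mem_divisors.mpr ⟨((hmem π).mp hπ).2.2, hn⟩]
  refine Finset.sum_congr rfl fun d hd => ?_
  have hfiber : monicIrreducibles F d = ↑(T.filter (natDegree · = d)) := by
    ext π
    simp only [monicIrreducibles, Set.mem_ofPred_eq, Finset.coe_filter, hmem]
    exact ⟨fun ⟨h₁, h₂, h₃⟩ => ⟨⟨h₁, h₂, h₃ ▸ Nat.dvd_of_mem_divisors hd⟩, h₃⟩,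
      fun ⟨⟨h₁, h₂, _⟩, h₃⟩ => ⟨h₁, h₂, h₃⟩⟩
  rw [hfiber, Set.ncard_coe_finset, Finset.sum_congr rfl fun π hπ => (Finset.mem_filter.mp hπ).2,
    Finset.sum_const, smul_eq_mul, mul_comm]

theorem ncard_monicIrreducibles_one : (monicIrreducibles F 1).ncard = Fintype.card F := by
  simpa using (card_pow_eq_sum_divisors (F := F) one_ne_zero).symm

theorem mul_ncard_monicIrreducibles_modEq {d : ℕ} (hd : 1 < d) :
    (d * (monicIrreducibles F d).ncard : ℤ) ≡ ((Fintype.card F : ℤ) - 1) * d.totient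
      [ZMOD ((Fintype.card F : ℤ) - 1) ^ 2] := by
  set c : ℤ := Fintype.card F - 1
  -- With the correction term at `i = 1`, the divisor sums are `(1 + c)ⁿ - 1 - n c`.
  have hsum : ∀ n > 0, c ^ 2 ∣ ∑ i ∈ n.divisors,
      ((i * (monicIrreducibles F i).ncard : ℤ) - c * i.totient - if i = 1 then 1 else 0) := by
    intro n hn
    have hgauss : ∑ i ∈ n.divisors, (i * (monicIrreducibles F i).ncard : ℤ) = (1 + c) ^ n := by
      rw [add_sub_cancel]
      exact_mod_cast (card_pow_eq_sum_divisors hn.ne').symm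
    have htot : ∑ i ∈ n.divisors, (i.totient : ℤ) = n := by exact_mod_cast Nat.sum_totient n
    rw [Finset.sum_sub_distrib, Finset.sum_sub_distrib, hgauss, ← Finset.mul_sum, htot,
      Finset.sum_ite_eq', if_pos (Nat.one_mem_divisors.mpr hn.ne')]
    simpa using sq_dvd_add_pow_sub_sub c 1 n
  refine Int.ModEq.symm (Int.modEq_iff_dvd.mpr ?_)
  simpa [hd.ne'] using dvd_of_forall_dvd_sum_divisors hsum (n := d) (by omega)

theorem not_dvd_ncard_monicIrreducibles {p d : ℕ} (hp : p.Prime)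
    (hpq : p ∣ Fintype.card F - 1) (hpq2 : ¬ p ^ 2 ∣ Fintype.card F - 1) (hpd : p ∣ d)
    (hφ : ¬ p ∣ d.totient) : ¬ p ∣ (monicIrreducibles F d).ncard := by
  intro hN
  have hd0 : d ≠ 0 := by rintro rfl; simp at hφ
  have hd1 : d ≠ 1 := by rintro rfl; exact hp.ne_one (Nat.dvd_one.mp hpd)
  obtain ⟨t, ht⟩ := hpq
  have hcast : (Fintype.card F : ℤ) - 1 = (p * t : ℕ) := by
    rw [← ht, Nat.cast_sub Fintype.card_pos]; rfl
  have hsq : (p : ℤ) ^ 2 ∣ (p * t : ℕ) * d.totient := by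
    have h := (mul_ncard_monicIrreducibles_modEq (F := F) (d := d) (by omega)).symm.dvd
    rw [hcast] at h
    refine (dvd_sub_right ?_).mp ((pow_dvd_pow_of_dvd ?_ 2).trans h)
    · rw [sq]; exact mul_dvd_mul (Int.natCast_dvd_natCast.mpr hpd) (Int.natCast_dvd_natCast.mpr hN)
    · exact Int.natCast_dvd_natCast.mpr (dvd_mul_right p t)
  have hpt : p ∣ t * d.totient := by
    rw [← Nat.cast_mul, ← Nat.cast_pow, Int.natCast_dvd_natCast, sq, mul_assoc] at hsq
    exact Nat.dvd_of_mul_dvd_mul_left hp.pos hsq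
  rcases hp.dvd_mul.mp hpt with ⟨u, rfl⟩ | h
  · exact hpq2 ⟨u, by rw [ht, sq, mul_assoc]⟩
  · exact hφ h

theorem not_dvd_ncard_monicIrreducibles_one {p : ℕ} (hp : p.Prime)
    (hpq : p ∣ Fintype.card F - 1) : ¬ p ∣ (monicIrreducibles F 1).ncard := by
  rw [ncard_monicIrreducibles_one]
  intro hpq'
  have hsub : Fintype.card F - (Fintype.card F - 1) = 1 := by
    have := Fintype.card_pos (α := F)
    omega
  exact hp.ne_one (Nat.dvd_one.mp (hsub ▸ Nat.dvd_sub hpq' hpq))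

end FiniteField

theorem not_dvd_totient_mul_two_pow {p : ℕ} (hp : p.Prime) (hp2 : p ≠ 2) (j : ℕ) :
    ¬ p ∣ (p * 2 ^ j).totient := by
  have hcop : p.Coprime (2 ^ j) := ((Nat.coprime_primes hp Nat.prime_two).mpr hp2).pow_right j
  rw [Nat.totient_mul hcop, Nat.totient_prime hp, hp.dvd_mul]
  rintro (h | h)
  · have := Nat.le_of_dvd (Nat.sub_pos_of_lt hp.one_lt) h
    have := hp.one_lt
    omega
  · cases j with
    | zero => exact hp.ne_one (Nat.dvd_one.mp (by simpa using h))
    | succ j =>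
      rw [Nat.totient_prime_pow_succ Nat.prime_two, Nat.add_one_sub_one, mul_one] at h
      exact hp2 ((Nat.prime_dvd_prime_iff_eq hp Nat.prime_two).mp (hp.dvd_of_dvd_pow h))

theorem sum_image_mul_two_pow_bitIndices {p : ℕ} (hp : p ≠ 0) (n : ℕ) :
    ∑ d ∈ n.bitIndices.toFinset.image (p * 2 ^ ·), d = p * n := by
  rw [Finset.sum_image fun _ _ _ _ h => Nat.pow_right_injective le_rfl
    (Nat.eq_of_mul_eq_mul_left (Nat.pos_of_ne_zero hp) h), ← Finset.mul_sum,
    Finset.sum_toFinset_bitIndices_two_pow]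

theorem exists_partition_of_dvd_mul_sub_one {p m : ℕ} (hp : p.Prime) (h : p ∣ m * (m - 1)) :
    ∃ (D : Finset ℕ) (lam : m.Partition), lam.parts = D.val ∧
      ∀ d ∈ D, d = 1 ∨ ∃ j, d = p * 2 ^ j := by
  set B := fun n : ℕ => n.bitIndices.toFinset.image (p * 2 ^ ·)
  have hB (n : ℕ) : ∀ d ∈ B n, ∃ j, d = p * 2 ^ j := by
    simp only [B, Finset.mem_image]
    rintro _ ⟨j, -, rfl⟩
    exact ⟨j, rfl⟩
  have hpos {d : ℕ} (hd : d = 1 ∨ ∃ j, d = p * 2 ^ j) : 0 < d := by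
    rcases hd with rfl | ⟨j, rfl⟩
    exacts [one_pos, Nat.mul_pos hp.pos (Nat.two_pow_pos j)]
  obtain ⟨D, hsum, hD⟩ : ∃ D : Finset ℕ, ∑ d ∈ D, d = m ∧ ∀ d ∈ D, d = 1 ∨ ∃ j, d = p * 2 ^ j := by
    by_cases hm : p ∣ m
    · refine ⟨B (m / p), ?_, fun d hd => .inr (hB _ d hd)⟩
      rw [sum_image_mul_two_pow_bitIndices hp.ne_zero, Nat.mul_div_cancel' hm]
    · have hm1 : p ∣ m - 1 := (hp.dvd_mul.mp h).resolve_left hm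
      have hm0 : m ≠ 0 := by rintro rfl; exact hm (dvd_zero p)
      have hone : 1 ∉ B ((m - 1) / p) := fun h1 => by
        obtain ⟨j, hj⟩ := hB _ 1 h1
        exact hp.ne_one (Nat.eq_one_of_mul_eq_one_right hj.symm)
      refine ⟨insert 1 (B ((m - 1) / p)), ?_, ?_⟩
      · rw [Finset.sum_insert hone, sum_image_mul_two_pow_bitIndices hp.ne_zero,
          Nat.mul_div_cancel' hm1]
        omega
      · simp only [Finset.mem_insert]
        rintro d (rfl | hd)
        exacts [.inl rfl, .inr (hB _ d hd)]
  exact ⟨D, ⟨D.val, fun hd => hpos (hD _ hd), (Finset.sum_val D).trans hsum⟩, rfl, hD⟩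

theorem stmt18_general {F : Type*} [Field F] [Fintype F] (q m : ℕ) (hq : Fintype.card F = q)
    (h2 : ∃ n : ℕ, q = 2 ^ n) (hsf : Squarefree (q - 1))
    (hdist : ∀ lam : m.Partition, ∀ d : F, d ≠ 0 →
      {f : F[X] | hasFactorizationType f lam ∧
          polyDisc f = algebraMap F (AlgebraicClosure F) d}.ncard * (q - 1) =
      {f : F[X] | hasFactorizationType f lam}.ncard) :
    Nat.gcd (q - 1) (m * (m - 1)) = 1 := by
  subst hq
  by_contra hgcd
  obtain ⟨p, hp, hpgcd⟩ := Nat.exists_prime_and_dvd hgcd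
  have hpq : p ∣ Fintype.card F - 1 := hpgcd.trans (Nat.gcd_dvd_left _ _)
  have hpm : p ∣ m * (m - 1) := hpgcd.trans (Nat.gcd_dvd_right _ _)
  have hp2 : p ≠ 2 := by
    intro h
    rw [h] at hpq
    obtain ⟨n, hn⟩ := h2
    have hq : 1 < Fintype.card F := Fintype.one_lt_card
    have heven : 2 ∣ Fintype.card F := hn ▸ dvd_pow_self 2 (by rintro rfl; simp_all)
    omega
  have hpq2 : ¬ p ^ 2 ∣ Fintype.card F - 1 := fun h =>
    hp.ne_one (Nat.isUnit_iff.mp (hsf p (sq p ▸ h)))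
  obtain ⟨D, lam, hD, hDparts⟩ := exists_partition_of_dvd_mul_sub_one hp hpm
  have hdvd : Fintype.card F - 1 ∣ ∏ d ∈ D, (monicIrreducibles F d).ncard := by
    rw [← ncard_setOf_hasFactorizationType lam hD, ← hdist lam 1 one_ne_zero]
    exact dvd_mul_left _ _
  obtain ⟨d, hd, hpd⟩ := hp.prime.exists_mem_finset_dvd (hpq.trans hdvd)
  rcases hDparts d hd with rfl | ⟨j, rfl⟩
  · exact not_dvd_ncard_monicIrreducibles_one hp hpq hpd
  · exact not_dvd_ncard_monicIrreducibles hp hpq hpq2 (dvd_mul_right p _)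
      (not_dvd_totient_mul_two_pow hp hp2 j) hpd

/-- Converse direction for `q` a power of `2` with `q - 1` squarefree: if for every partition
`λ` of `m ≥ 2` the discriminants of the polynomials in `S_{λ,F_q}` are equally distributed
among the elements of `F_q^×` (i.e. each `d ∈ F_q^×` is the discriminant of exactly
`|S_{λ,F_q}|/(q-1)` polynomials of `S_{λ,F_q}`), then `gcd(q-1, m(m-1)) = 1`. -/
theorem stmt18 {F : Type*} [Field F] [Fintype F] (q m : ℕ) (hq : Fintype.card F = q)
    (h2 : ∃ n : ℕ, q = 2 ^ n) (hsf : Squarefree (q - 1)) (hm : 2 ≤ m)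
    (hdist : ∀ lam : m.Partition, ∀ d : F, d ≠ 0 →
      {f : F[X] | hasFactorizationType f lam ∧
          polyDisc f = algebraMap F (AlgebraicClosure F) d}.ncard * (q - 1) =
      {f : F[X] | hasFactorizationType f lam}.ncard) :
    Nat.gcd (q - 1) (m * (m - 1)) = 1 :=
  stmt18_general q m hq h2 hsf hdist
end

section
/- Let p be a prime and q a power of p. For every integer m ≥ p with m ≥ 2 and every d ∈ F_q, there exists a monic polynomial f ∈ F_q[x] of degree m such that disc(f) = d. -/
open Polynomial
open scoped Classical

/-! If `f' = c ∏_{b ∈ B} (X - b)`, then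
`∏_{f(α) = 0} f'(α) = c^m ∏_b ∏_α (α - b) = c^m ∏_b (-1)^m f(b)`,
so the discriminant of `f` is determined by the values of `f` at the roots of `f'`.
In characteristic `p` the term `t X^p` has zero derivative: adding it to `f` leaves `f'`
unchanged and moves `f(1)` by `t`. Taking `f` of degree `m > p` with `f' = c X^e (X - 1)^p`
(that is, `c X^e (X^p - 1)`, so `f` can be written down explicitly), the discriminant of
`f + t X^p` is a fixed nonzero constant times `(f(1) + t)^p`, and this takes every value because
Frobenius is bijective on a finite field. For `m = p` the polynomial `X^p + c X` has
discriminant `±c^p`.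
-/

namespace Polynomial

section Semiring

variable {R : Type*} [Semiring R]

theorem natDegree_X_pow_add_of_natDegree_lt [Nontrivial R] {h : R[X]} {m : ℕ}
    (hh : h.natDegree < m) : (X ^ m + h).natDegree = m := by
  rw [natDegree_add_eq_left_of_natDegree_lt (by rwa [natDegree_X_pow]), natDegree_X_pow]

theorem monic_X_pow_add_of_natDegree_lt {h : R[X]} {m : ℕ} (hh : h.natDegree < m) :
    (X ^ m + h).Monic :=
  monic_X_pow_add (degree_le_natDegree.trans_lt (by exact_mod_cast hh))

theorem natDegree_C_mul_X_lt (c : R) {n : ℕ} (hn : 1 < n) : (C c * X).natDegree < n :=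
  (natDegree_C_mul_le c X).trans_lt (natDegree_X_le.trans_lt hn)

theorem natDegree_add_C_mul_X_pow_of_lt {g : R[X]} {n : ℕ} (hn : n < g.natDegree) (t : R) :
    (g + C t * X ^ n).natDegree = g.natDegree :=
  natDegree_add_eq_left_of_natDegree_lt ((natDegree_C_mul_X_pow_le t n).trans_lt hn)

theorem Monic.add_C_mul_X_pow_of_lt {g : R[X]} (hg : g.Monic) {n : ℕ} (hn : n < g.natDegree)
    (t : R) : (g + C t * X ^ n).Monic :=
  hg.add_of_left (degree_lt_degree ((natDegree_C_mul_X_pow_le t n).trans_lt hn))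

end Semiring

variable {K : Type*} [CommRing K] [IsDomain K] {f : K[X]}

theorem Splits.prod_roots_sub_eq (hf : f.Splits) (hm : f.Monic) (b : K) :
    (f.roots.map (· - b)).prod = (-1) ^ f.natDegree * f.eval b := by
  have hneg : f.roots.map (· - b) = (f.roots.map (b - ·)).map Neg.neg := by
    simp [Multiset.map_map]
  rw [hneg, Multiset.prod_map_neg, Multiset.card_map, splits_iff_card_roots.mp hf,
    hf.eval_eq_prod_roots_of_monic hm]

theorem Splits.prod_roots_eval_C_mul_prod_X_sub_C (hf : f.Splits) (hm : f.Monic) (c : K)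
    (B : Multiset K) :
    (f.roots.map fun a => (C c * (B.map fun b => X - C b).prod).eval a).prod =
      c ^ f.natDegree * (B.map fun b => (-1) ^ f.natDegree * f.eval b).prod := by
  simp only [eval_mul, eval_C, eval_multiset_prod, Multiset.map_map, Function.comp_def, eval_sub,
    eval_X]
  rw [Multiset.prod_map_mul, Multiset.map_const', Multiset.prod_replicate,
    splits_iff_card_roots.mp hf, Multiset.prod_map_prod_map]
  simp only [← hf.prod_roots_sub_eq hm]

end Polynomial

open Polynomial

theorem polyDisc_eq_of_derivative_eq {F : Type*} [Field F] {f : F[X]} (hf : f.Monic)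
    (h2 : 2 ≤ f.natDegree) {c : F} {B : Multiset F}
    (hd : derivative f = C c * (B.map fun b => X - C b).prod) :
    polyDisc f = algebraMap F (AlgebraicClosure F)
      ((-1) ^ (f.natDegree * (f.natDegree - 1) / 2) * c ^ f.natDegree *
        (B.map fun b => (-1) ^ f.natDegree * f.eval b).prod) := by
  set φ := algebraMap F (AlgebraicClosure F)
  have hsplit : (f.map φ).Splits := IsAlgClosed.splits _
  have key := hsplit.prod_roots_eval_C_mul_prod_X_sub_C (hf.map φ) (φ c) (B.map φ)
  rw [hf.natDegree_map] at key
  rw [polyDisc, if_neg (by omega), hf.leadingCoeff, map_one, one_pow, mul_one, hd]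
  simp only [Polynomial.map_mul, map_C, Polynomial.map_multiset_prod, Multiset.map_map,
    Function.comp_def, Polynomial.map_sub, map_X] at key ⊢
  rw [key]
  simp only [eval_map_apply, Multiset.prod_map_mul, Multiset.map_const', Multiset.prod_replicate,
    map_mul, map_pow, map_neg, map_one, map_multiset_prod, Multiset.map_map, Function.comp_apply]
  ring

theorem polyDisc_eq_of_derivative_eq_C {F : Type*} [Field F] {f : F[X]} (hf : f.Monic)
    (h2 : 2 ≤ f.natDegree) {c : F} (hd : derivative f = C c) :
    polyDisc f = algebraMap F (AlgebraicClosure F)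
      ((-1) ^ (f.natDegree * (f.natDegree - 1) / 2) * c ^ f.natDegree) := by
  simpa using polyDisc_eq_of_derivative_eq hf h2 (B := 0) (by simpa using hd)

theorem polyDisc_eq_of_derivative_eq_C_mul_X_pow_mul {F : Type*} [Field F] {f : F[X]}
    (hf : f.Monic) (h2 : 2 ≤ f.natDegree) {c : F} {e j : ℕ}
    (hd : derivative f = C c * X ^ e * (X - 1) ^ j) :
    polyDisc f = algebraMap F (AlgebraicClosure F)
      ((-1) ^ (f.natDegree * (f.natDegree - 1) / 2) * c ^ f.natDegree *
        ((-1) ^ f.natDegree * f.eval 0) ^ e * ((-1) ^ f.natDegree * f.eval 1) ^ j) := by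
  have hB : derivative f = C c *
      ((Multiset.replicate e (0 : F) + Multiset.replicate j 1).map fun b : F => X - C b).prod := by
    simp [hd, mul_assoc]
  rw [polyDisc_eq_of_derivative_eq hf h2 hB]
  simp [mul_assoc]

section CharP

variable {F : Type*} [Field F] {p : ℕ} [hp : Fact p.Prime] [CharP F p]

theorem polyDisc_X_pow_add_C_mul_X (c : F) :
    polyDisc (X ^ p + C c * X) =
      algebraMap F (AlgebraicClosure F) ((-1) ^ (p * (p - 1) / 2) * c ^ p) := by
  have hdeg := natDegree_C_mul_X_lt c hp.out.one_lt
  have hnat := natDegree_X_pow_add_of_natDegree_lt hdeg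
  rw [polyDisc_eq_of_derivative_eq_C (monic_X_pow_add_of_natDegree_lt hdeg)
    (by rw [hnat]; exact hp.out.two_le), hnat]
  simp [derivative_X_pow]

theorem exists_monic_natDegree_eq_char_polyDisc_eq [Finite F] (d : F) :
    ∃ f : F[X], f.Monic ∧ f.natDegree = p ∧
      polyDisc f = algebraMap F (AlgebraicClosure F) d := by
  obtain ⟨c, hc⟩ := surjective_frobenius F p ((-1) ^ (p * (p - 1) / 2) * d)
  have hdeg := natDegree_C_mul_X_lt c hp.out.one_lt
  refine ⟨X ^ p + C c * X, monic_X_pow_add_of_natDegree_lt hdeg,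
    natDegree_X_pow_add_of_natDegree_lt hdeg, ?_⟩
  rw [frobenius_def] at hc
  rw [polyDisc_X_pow_add_C_mul_X, hc, ← mul_assoc, ← pow_add,
    Even.neg_one_pow (Even.add_self _), one_mul]

theorem polyDisc_add_C_mul_X_pow_char {g : F[X]} (hg : g.Monic) (hpg : p < g.natDegree) {c : F}
    {e : ℕ} (hd : derivative g = C c * X ^ e * (X - 1) ^ p) (t : F) :
    polyDisc (g + C t * X ^ p) = algebraMap F (AlgebraicClosure F)
      ((-1) ^ (g.natDegree * (g.natDegree - 1) / 2) * c ^ g.natDegree *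
        ((-1) ^ g.natDegree * g.eval 0) ^ e * ((-1) ^ g.natDegree * (g.eval 1 + t)) ^ p) := by
  have hdeg := natDegree_add_C_mul_X_pow_of_lt hpg t
  have hd' : derivative (g + C t * X ^ p) = C c * X ^ e * (X - 1) ^ p := by
    simp [hd, derivative_X_pow]
  rw [polyDisc_eq_of_derivative_eq_C_mul_X_pow_mul (hg.add_C_mul_X_pow_of_lt hpg t)
    (by rw [hdeg]; linarith [hp.out.two_le]) hd', hdeg]
  simp [hp.out.ne_zero]

theorem exists_monic_natDegree_eq_polyDisc_eq_of_derivative_eq [Finite F] {g : F[X]}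
    (hg : g.Monic) (hpg : p < g.natDegree) {c : F} (hc : c ≠ 0) {e : ℕ} (h0 : g.eval 0 ≠ 0)
    (hd : derivative g = C c * X ^ e * (X - 1) ^ p) (d : F) :
    ∃ f : F[X], f.Monic ∧ f.natDegree = g.natDegree ∧
      polyDisc f = algebraMap F (AlgebraicClosure F) d := by
  set m := g.natDegree
  set A : F := (-1) ^ (m * (m - 1) / 2) * c ^ m * ((-1) ^ m * g.eval 0) ^ e * ((-1) ^ m) ^ p
  have hA : A ≠ 0 := by simp [A, hc, h0]
  obtain ⟨w, hw⟩ := surjective_frobenius F p (d / A)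
  rw [frobenius_def] at hw
  refine ⟨g + C (w - g.eval 1) * X ^ p, hg.add_C_mul_X_pow_of_lt hpg _,
    natDegree_add_C_mul_X_pow_of_lt hpg _, ?_⟩
  have hAw : A * w ^ p = d := by rw [hw, mul_div_cancel₀ _ hA]
  rw [polyDisc_add_C_mul_X_pow_char hg hpg hd, add_sub_cancel, ← hAw]
  congr 1
  simp only [A, m]
  ring

theorem derivative_X_pow_add_one_sub_X_pow_sub_char {m : ℕ} (hpm : p < m) :
    derivative (X ^ m + (1 - X ^ (m - p)) : F[X]) =
      C (m : F) * X ^ (m - p - 1) * (X - 1) ^ p := by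
  obtain ⟨k, rfl⟩ : ∃ k, m = k + p + 1 := ⟨m - p - 1, by omega⟩
  rw [show k + p + 1 - p = k + 1 by omega, show k + 1 - 1 = k by omega, sub_pow_char]
  simp only [derivative_add, derivative_sub, derivative_one, derivative_X_pow]
  push_cast
  simp only [CharP.cast_eq_zero, add_zero, one_pow]
  ring

theorem derivative_X_pow_add_X_pow_sub_X_pow_add_one_of_dvd {m : ℕ} (hpm : p ∣ m)
    (h2p : 2 * p ≤ m) :
    derivative (X ^ m + (X ^ (m - p + 1) - X ^ (m - 2 * p + 1) + 1) : F[X]) =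
      X ^ (m - 2 * p) * (X - 1) ^ p := by
  obtain ⟨k, rfl⟩ : ∃ k, m = k + 2 * p := ⟨m - 2 * p, by omega⟩
  have hk : (k : F) = 0 := by
    rw [CharP.cast_eq_zero_iff F p]
    exact (Nat.dvd_add_left (dvd_mul_left p 2)).mp hpm
  rw [show k + 2 * p - p + 1 = k + p + 1 by omega, show k + 2 * p - 2 * p = k by omega,
    sub_pow_char]
  simp only [derivative_add, derivative_sub, derivative_one, derivative_X_pow]
  push_cast
  simp only [hk, CharP.cast_eq_zero, one_pow, C_0, C_1, zero_mul, zero_add, mul_zero]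
  ring

theorem exists_monic_natDegree_eq_polyDisc_eq_of_not_dvd [Finite F] {m : ℕ} (hpm : p < m)
    (hdvd : ¬p ∣ m) (d : F) : ∃ f : F[X], f.Monic ∧ f.natDegree = m ∧
      polyDisc f = algebraMap F (AlgebraicClosure F) d := by
  have := hp.out.pos
  have hh : (1 - X ^ (m - p) : F[X]).natDegree < m :=
    lt_of_le_of_lt (b := m - p) (by compute_degree) (by omega)
  have hdeg := natDegree_X_pow_add_of_natDegree_lt hh
  obtain ⟨f, hf, hfdeg, hdisc⟩ := exists_monic_natDegree_eq_polyDisc_eq_of_derivative_eq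
    (monic_X_pow_add_of_natDegree_lt hh) (by rw [hdeg]; exact hpm)
    ((CharP.cast_eq_zero_iff F p m).not.mpr hdvd)
    (by simp [show m ≠ 0 by omega, show m - p ≠ 0 by omega])
    (derivative_X_pow_add_one_sub_X_pow_sub_char hpm) d
  exact ⟨f, hf, hfdeg.trans hdeg, hdisc⟩

theorem exists_monic_natDegree_eq_polyDisc_eq_of_dvd [Finite F] {m : ℕ} (hpm : p < m)
    (hdvd : p ∣ m) (d : F) : ∃ f : F[X], f.Monic ∧ f.natDegree = m ∧
      polyDisc f = algebraMap F (AlgebraicClosure F) d := by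
  have h2p : 2 * p ≤ m := by
    obtain ⟨k, rfl⟩ := hdvd
    have : 1 < k := Nat.lt_of_mul_lt_mul_left (a := p) (by omega)
    nlinarith
  have := hp.out.two_le
  have hh : (X ^ (m - p + 1) - X ^ (m - 2 * p + 1) + 1 : F[X]).natDegree < m :=
    lt_of_le_of_lt (b := m - p + 1) (by compute_degree; omega) (by omega)
  have hdeg := natDegree_X_pow_add_of_natDegree_lt hh
  obtain ⟨f, hf, hfdeg, hdisc⟩ := exists_monic_natDegree_eq_polyDisc_eq_of_derivative_eq
    (monic_X_pow_add_of_natDegree_lt hh) (by rw [hdeg]; exact hpm) one_ne_zero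
    (by simp [show m ≠ 0 by omega])
    (by rw [derivative_X_pow_add_X_pow_sub_X_pow_add_one_of_dvd hdvd h2p, C_1, one_mul]) d
  exact ⟨f, hf, hfdeg.trans hdeg, hdisc⟩

end CharP

theorem stmt19_general {F : Type*} [Field F] [Fintype F] (p : ℕ) (hp : p.Prime) [CharP F p]
    (m : ℕ) (hmp : p ≤ m) (d : F) :
    ∃ f : F[X], f.Monic ∧ f.natDegree = m ∧
      polyDisc f = algebraMap F (AlgebraicClosure F) d := by
  have := Fact.mk hp
  rcases hmp.eq_or_lt with rfl | hlt
  · exact exists_monic_natDegree_eq_char_polyDisc_eq d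
  by_cases hdvd : p ∣ m
  · exact exists_monic_natDegree_eq_polyDisc_eq_of_dvd hlt hdvd d
  · exact exists_monic_natDegree_eq_polyDisc_eq_of_not_dvd hlt hdvd d

/-- Surjectivity of the discriminant: if `F_q` has characteristic `p` and `m ≥ p`, `m ≥ 2`,
then every `d ∈ F_q` is the discriminant of some monic polynomial of degree `m` in
`F_q[x]`. -/
theorem stmt19 {F : Type*} [Field F] [Fintype F] (p : ℕ) (hp : p.Prime) [CharP F p]
    (m : ℕ) (hm2 : 2 ≤ m) (hmp : p ≤ m) (d : F) :
    ∃ f : F[X], f.Monic ∧ f.natDegree = m ∧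
      polyDisc f = algebraMap F (AlgebraicClosure F) d :=
  stmt19_general p hp m hmp d
end
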